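/- arXiv:1203.2112 — 10 statements merged into one kernel-verified Lean document; each statement's English description precedes it below -/
import Mathlib

section
/- For every 1 ≤ j ≤ n, the principal generalized minor Δ_{w₀Λ_j, Λ_j}(Θ(c)), i.e. the minor of Θ(c) on rows {n+2−j, n+3−j, …, n+1} and columns {1, 2, …, j}, equals 1. -/
/-!
Read the minors of `g` on the rows `R = {n+2-j, …, n+1}` as the coefficients of the covector
`e_R^* g` in the `j`-th exterior power, indexed by increasing column tuples. Right
multiplication by `𝐲_i(c)` adds `c` times column `i+1` to column `i` and then rescales
columns `i`, `i+1` by `c⁻¹`, `c`; on column tuples it can only move an entry from `i+1` down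
to `i`. So the property "the minor at `C₀` is `1` and every minor at a tuple not dominating
`C₀` entrywise vanishes" survives each factor of `Θ(c)`, with `C₀` either unchanged or
lowered by one in a single entry. Starting from `C₀ = R` for the identity, the `k`-th sweep
`𝐲_1 ⋯ 𝐲_{n+1-k}` slides the interval `C₀` down by one until it reaches `{1, …, j}`, where
it stays.
-/

open Matrix

/-- The matrix unit `E_{k,l}` in 1-based indexing (zero matrix if out of range). -/
def Em (n k l : ℕ) : Matrix (Fin (n+1)) (Fin (n+1)) ℂ :=
  Matrix.of fun a b => if (a : ℕ) + 1 = k ∧ (b : ℕ) + 1 = l then 1 else 0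

/-- The lower unipotent one-parameter element `y_i(c) = I + c E_{i+1,i}` (1-based `i`). -/
noncomputable def ym (n i : ℕ) (c : ℂ) : Matrix (Fin (n+1)) (Fin (n+1)) ℂ :=
  1 + c • Em n (i+1) i

/-- The coweight torus element `α_i^∨(c)`: diagonal with `c` at position `i`,
`c⁻¹` at position `i+1` (1-based). -/
noncomputable def alco (n i : ℕ) (c : ℂ) : Matrix (Fin (n+1)) (Fin (n+1)) ℂ :=
  Matrix.diagonal fun a => if (a : ℕ) + 1 = i then c else if (a : ℕ) + 1 = i + 1 then c⁻¹ else 1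

/-- `𝐲_i(c) = y_i(c) · α_i^∨(c⁻¹)`. -/
noncomputable def Yb (n i : ℕ) (c : ℂ) : Matrix (Fin (n+1)) (Fin (n+1)) ℂ :=
  ym n i c * alco n i c⁻¹

/-- `Θ(c) = ∏_{k=1}^{n} ( 𝐲_1(c_{k,1}) 𝐲_2(c_{k,2}) ⋯ 𝐲_{n+1−k}(c_{k,n+1−k}) )`,
the product over `k` taken in increasing order. -/
noncomputable def Theta (n : ℕ) (c : ℕ → ℕ → ℂ) : Matrix (Fin (n+1)) (Fin (n+1)) ℂ :=
  ((List.range n).map fun k =>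
    ((List.range (n - k)).map fun l => Yb n (l+1) (c (k+1) (l+1))).prod).prod


open Function Set

theorem Fin.castSucc_covBy_succ {n : ℕ} (i : Fin n) : i.castSucc ⋖ i.succ :=
  ⟨Fin.castSucc_lt_succ, fun k h₁ h₂ => by
    rw [Fin.lt_def] at h₁ h₂; simp only [Fin.val_castSucc, Fin.val_succ] at h₁ h₂; omega⟩

namespace Matrix

variable {α K ι κ o : Type*}

theorem submatrix_updateCol_of_forall_ne [DecidableEq κ] (M : Matrix ι κ α) (R : o → ι)
    {C : o → κ} {k : κ} (v : ι → α) (h : ∀ t, C t ≠ k) :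
    (M.updateCol k v).submatrix R C = M.submatrix R C := by
  ext s t; simp [updateCol_ne (h t)]

theorem submatrix_updateCol_of_eq [DecidableEq κ] [DecidableEq o] (M : Matrix ι κ α)
    (R : o → ι) {C : o → κ} (hC : Injective C) {r : o} {k : κ} (hr : C r = k) (v : ι → α) :
    (M.updateCol k v).submatrix R C = (M.submatrix R C).updateCol r (v ∘ R) := by
  ext s t
  rcases eq_or_ne t r with rfl | ht
  · simp [hr]
  · simp [ht, updateCol_ne (fun h => ht (hC (h.trans hr.symm)))]

theorem updateCol_submatrix_eq_submatrix_update [DecidableEq o] (M : Matrix ι κ α)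
    (R : o → ι) (C : o → κ) (r : o) (k : κ) :
    (M.submatrix R C).updateCol r (fun s => M (R s) k) = M.submatrix R (update C r k) := by
  ext s t
  rcases eq_or_ne t r with rfl | ht <;> simp [*]

variable [CommRing K] [Fintype o] [DecidableEq o]

theorem det_submatrix_mul_diagonal [Fintype κ] [DecidableEq κ] (M : Matrix ι κ K) (d : κ → K)
    (R : o → ι) (C : o → κ) :
    ((M * diagonal d).submatrix R C).det = (M.submatrix R C).det * ∏ s, d (C s) := by
  have : (M * diagonal d).submatrix R C = M.submatrix R C * diagonal (d ∘ C) := by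
    ext s t; simp [mul_diagonal]
  rw [this, det_mul, det_diagonal, comp_def]

variable [DecidableEq κ] (M : Matrix ι κ K) (R : o → ι)

theorem det_submatrix_updateCol_add_of_eq_of_eq {C : o → κ} (hC : Injective C) {r r' : o}
    {k k' : κ} (hr : C r = k) (hr' : C r' = k') (hk : k ≠ k') (c : K) :
    ((M.updateCol k fun p => M p k + c * M p k').submatrix R C).det = (M.submatrix R C).det := by
  have hrr' : r ≠ r' := by rintro rfl; exact hk (hr.symm.trans hr')
  rw [submatrix_updateCol_of_eq M R hC hr]
  convert det_updateCol_add_smul_self (M.submatrix R C) hrr' c using 3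
  ext s; simp [hr, hr']

theorem det_submatrix_updateCol_add_of_eq {C : o → κ} (hC : Injective C) {r : o} {k : κ}
    (hr : C r = k) (k' : κ) (c : K) :
    ((M.updateCol k fun p => M p k + c * M p k').submatrix R C).det
      = (M.submatrix R C).det + c * (M.submatrix R (update C r k')).det := by
  rw [submatrix_updateCol_of_eq M R hC hr, ← updateCol_submatrix_eq_submatrix_update]
  have : (fun p => M p k + c * M p k') ∘ R
      = (fun s => M.submatrix R C s r) + c • fun s => M (R s) k' := by
    ext s; simp [hr]
  rw [this, det_updateCol_add, det_updateCol_smul, updateCol_eq_self]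

end Matrix

section CoveringSwap

variable {α : Type*} [LinearOrder α] {j : ℕ} {a b : α}

theorem StrictMono.update_up_of_covBy {f : Fin j → α} (hf : StrictMono f) (hab : a ⋖ b)
    {r : Fin j} (hr : f r = a) (hb : ∀ t, f t ≠ b) : StrictMono (update f r b) := by
  intro s t hst
  rcases eq_or_ne s r with rfl | hs
  · rw [update_self, update_of_ne hst.ne']
    exact lt_of_le_of_ne (hab.ge_of_gt (hr ▸ hf hst)) (hb t).symm
  rcases eq_or_ne t r with rfl | ht
  · rw [update_self, update_of_ne hs]
    exact (hr ▸ hf hst).trans hab.lt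
  · rw [update_of_ne hs, update_of_ne ht]
    exact hf hst

theorem StrictMono.update_down_of_covBy {f : Fin j → α} (hf : StrictMono f) (hab : a ⋖ b)
    {r : Fin j} (hr : f r = b) (ha : ∀ t, f t ≠ a) : StrictMono (update f r a) := by
  intro s t hst
  rcases eq_or_ne s r with rfl | hs
  · rw [update_self, update_of_ne hst.ne']
    exact hab.lt.trans (hr ▸ hf hst)
  rcases eq_or_ne t r with rfl | ht
  · rw [update_self, update_of_ne hs]
    exact lt_of_le_of_ne (hab.le_of_lt (hr ▸ hf hst)) (ha s)
  · rw [update_of_ne hs, update_of_ne ht]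
    exact hf hst

theorem le_of_le_update_up_of_covBy {C₀ D : Fin j → α} (hC₀ : Monotone C₀) (hD : StrictMono D)
    (hab : a ⋖ b) (hba : b ∈ range C₀ → a ∈ range C₀) {s : Fin j} (hs : D s = a)
    (h : C₀ ≤ update D s b) : C₀ ≤ D := by
  intro t
  rcases eq_or_ne t s with rfl | ht
  · have hle : C₀ t ≤ b := by simpa using h t
    rcases hle.lt_or_eq with hlt | heq
    · exact hs ▸ hab.le_of_lt hlt
    · -- `a = C₀ r` for some `r < t`, and then `a ≤ D r < D t = a`.
      obtain ⟨r, hr⟩ := hba ⟨t, heq⟩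
      have hrt : r < t := hC₀.reflect_lt (by rw [hr, heq]; exact hab.lt)
      have := h r
      rw [update_of_ne hrt.ne, hr, ← hs] at this
      exact absurd (hD hrt) this.not_gt
  · simpa [ht] using h t

theorem not_le_update_up_of_covBy {C₀ D : Fin j → α} (hC₀ : Injective C₀) (hab : a ⋖ b)
    {r s : Fin j} (hr : C₀ r = b) (hs : D s = a) (h : ¬ update C₀ r a ≤ D) :
    ¬ C₀ ≤ update D s b := by
  intro hle
  refine h fun t => ?_
  rcases eq_or_ne t s with rfl | hts
  · rcases eq_or_ne t r with rfl | htr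
    · simp [hs]
    · have hlt : C₀ t < b := lt_of_le_of_ne (by simpa using hle t)
        (fun heq => htr (hC₀ (heq.trans hr.symm)))
      rw [update_of_ne htr, hs]
      exact hab.le_of_lt hlt
  · calc update C₀ r a t ≤ C₀ t := update_le_self_iff.mpr (hr ▸ hab.le) t
      _ ≤ D t := by simpa [hts] using hle t

end CoveringSwap

/-- `e_R^* M` has lowest term `u • e_{C₀}^*` in the `j`-th exterior power, for the entrywise
order on increasing column tuples. -/
def HasLowestMinor {K ι κ : Type*} [CommRing K] [Preorder κ] {j : ℕ} (M : Matrix ι κ K)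
    (R : Fin j → ι) (C₀ : Fin j → κ) (u : K) : Prop :=
  (M.submatrix R C₀).det = u ∧
    ∀ C : Fin j → κ, StrictMono C → ¬ C₀ ≤ C → (M.submatrix R C).det = 0

namespace HasLowestMinor

variable {K ι κ : Type*} [CommRing K] {j : ℕ}

theorem one [LinearOrder κ] {R : Fin j → κ} (hR : StrictMono R) :
    HasLowestMinor (1 : Matrix κ κ K) R R 1 := by
  refine ⟨by rw [Matrix.submatrix_one R hR.injective, Matrix.det_one], fun C hC hle => ?_⟩
  by_cases hsub : ∀ t, ∃ s, R s = C t
  · choose σ hσ using hsub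
    have hσ_mono : StrictMono σ := fun s t hst => hR.lt_iff_lt.mp (by rw [hσ, hσ]; exact hC hst)
    exact absurd (fun s => (hR.monotone hσ_mono.le_apply).trans_eq (hσ s)) hle
  · push Not at hsub
    obtain ⟨t, ht⟩ := hsub
    exact Matrix.det_eq_zero_of_column_eq_zero t fun s => by simp [ht s]

theorem mul_diagonal [Preorder κ] [Fintype κ] [DecidableEq κ] {M : Matrix ι κ K}
    {R : Fin j → ι} {C₀ : Fin j → κ} {u : K} (hM : HasLowestMinor M R C₀ u) (d : κ → K) :
    HasLowestMinor (M * Matrix.diagonal d) R C₀ (u * ∏ s, d (C₀ s)) := by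
  refine ⟨by rw [Matrix.det_submatrix_mul_diagonal, hM.1], fun C hC hle => ?_⟩
  rw [Matrix.det_submatrix_mul_diagonal, hM.2 C hC hle, zero_mul]

variable [LinearOrder κ] {M : Matrix ι κ K} {R : Fin j → ι} {C₀ : Fin j → κ} {u : K} {a b : κ}

theorem det_submatrix_updateCol_add_eq_zero (hM : HasLowestMinor M R C₀ u) (hab : a ⋖ b)
    {D : Fin j → κ} (hD : StrictMono D) (hle : ¬ C₀ ≤ D)
    (hle' : ∀ s, D s = a → ¬ C₀ ≤ update D s b) (c : K) :
    ((M.updateCol a fun p => M p a + c * M p b).submatrix R D).det = 0 := by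
  by_cases ha : ∃ s, D s = a
  · obtain ⟨s, hs⟩ := ha
    by_cases hb : ∃ s', D s' = b
    · obtain ⟨s', hs'⟩ := hb
      rw [Matrix.det_submatrix_updateCol_add_of_eq_of_eq M R hD.injective hs hs' hab.ne]
      exact hM.2 D hD hle
    · push Not at hb
      rw [Matrix.det_submatrix_updateCol_add_of_eq M R hD.injective hs, hM.2 D hD hle,
        hM.2 _ (hD.update_up_of_covBy hab hs hb) (hle' s hs), mul_zero, add_zero]
  · push Not at ha
    rw [Matrix.submatrix_updateCol_of_forall_ne M R _ ha]
    exact hM.2 D hD hle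

theorem updateCol_add (hM : HasLowestMinor M R C₀ u) (hC₀ : StrictMono C₀) (hab : a ⋖ b)
    (hmem : a ∈ range C₀ ↔ b ∈ range C₀) (c : K) :
    HasLowestMinor (M.updateCol a fun p => M p a + c * M p b) R C₀ u := by
  refine ⟨?_, fun D hD hle => hM.det_submatrix_updateCol_add_eq_zero hab hD hle
    (fun s hs h => hle (le_of_le_update_up_of_covBy hC₀.monotone hD hab hmem.2 hs h)) c⟩
  by_cases ha : a ∈ range C₀
  · obtain ⟨r, hr⟩ := ha
    obtain ⟨r', hr'⟩ := hmem.1 ⟨r, hr⟩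
    rw [Matrix.det_submatrix_updateCol_add_of_eq_of_eq M R hC₀.injective hr hr' hab.ne, hM.1]
  · simp only [mem_range, not_exists] at ha
    rw [Matrix.submatrix_updateCol_of_forall_ne M R _ ha, hM.1]

theorem updateCol_add_of_eq (hM : HasLowestMinor M R C₀ u) (hC₀ : StrictMono C₀) (hab : a ⋖ b)
    {r : Fin j} (hr : C₀ r = b) (ha : ∀ t, C₀ t ≠ a) (c : K) :
    HasLowestMinor (M.updateCol a fun p => M p a + c * M p b) R (update C₀ r a) (c * u) := by
  have hC₀' : StrictMono (update C₀ r a) := hC₀.update_down_of_covBy hab hr ha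
  have hlt : update C₀ r a < C₀ := update_lt_self_iff.mpr (hr ▸ hab.lt)
  refine ⟨?_, fun D hD hle => hM.det_submatrix_updateCol_add_eq_zero hab hD
    (fun h => hle (hlt.le.trans h))
    (fun s hs => not_le_update_up_of_covBy hC₀.injective hab hr hs hle) c⟩
  rw [Matrix.det_submatrix_updateCol_add_of_eq M R hC₀'.injective (update_self r a C₀),
    update_idem, (update_eq_self_iff.mpr hr.symm : update C₀ r b = C₀), hM.2 _ hC₀' hlt.not_ge,
    hM.1, zero_add]

end HasLowestMinor

section Chevalley

variable {n : ℕ} {ι : Type*}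

theorem ym_eq (i : Fin n) (c : ℂ) :
    ym n (i+1) c = 1 + c • Matrix.single i.succ i.castSucc 1 := by
  ext p q
  simp only [ym, Em, Matrix.add_apply, Matrix.smul_apply, Matrix.of_apply, Matrix.single_apply,
    Fin.ext_iff, Fin.val_succ, Fin.val_castSucc]
  grind

theorem mul_ym (M : Matrix ι (Fin (n+1)) ℂ) (i : Fin n) (c : ℂ) :
    M * ym n (i+1) c = M.updateCol i.castSucc fun p => M p i.castSucc + c * M p i.succ := by
  ext p q
  rcases eq_or_ne q i.castSucc with rfl | hq
  · simp [ym_eq, Matrix.mul_add, mul_comm]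
  · simp [ym_eq, Matrix.mul_add, hq]

theorem Yb_eq (i : Fin n) (c : ℂ) :
    Yb n (i+1) c = ym n (i+1) c *
      Matrix.diagonal fun x => if x = i.castSucc then c⁻¹ else if x = i.succ then c else 1 := by
  simp only [Yb, alco, inv_inv, Fin.ext_iff, Fin.val_castSucc, Fin.val_succ, add_left_inj]

end Chevalley

namespace HasLowestMinor

variable {n j : ℕ} {ι : Type*} {M : Matrix ι (Fin (n+1)) ℂ} {R : Fin j → ι}
  {C₀ : Fin j → Fin (n+1)} {u : ℂ} {i : Fin n} {c : ℂ}

theorem mul_Yb (hM : HasLowestMinor M R C₀ u) (hC₀ : StrictMono C₀) (hc : c ≠ 0)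
    (hmem : i.castSucc ∈ range C₀ ↔ i.succ ∈ range C₀) :
    HasLowestMinor (M * Yb n (i+1) c) R C₀ u := by
  rw [Yb_eq, ← Matrix.mul_assoc, mul_ym]
  convert (hM.updateCol_add hC₀ i.castSucc_covBy_succ hmem c).mul_diagonal _ using 1
  by_cases ha : i.castSucc ∈ range C₀
  · obtain ⟨r, hr⟩ := ha
    obtain ⟨r', hr'⟩ := hmem.1 ⟨r, hr⟩
    have hrr' : r ≠ r' := fun h => i.castSucc_lt_succ.ne (hr.symm.trans (h ▸ hr'))
    rw [Fintype.prod_eq_mul r r' hrr' fun s hs => ?_]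
    · simp [hr, hr', i.castSucc_lt_succ.ne', hc]
    · simp [← hr, ← hr', hC₀.injective.ne hs.1, hC₀.injective.ne hs.2]
  · have hb : i.succ ∉ range C₀ := hmem.not.mp ha
    simp only [mem_range, not_exists] at ha hb
    simp [ha, hb]

theorem mul_Yb_of_eq (hM : HasLowestMinor M R C₀ u) (hC₀ : StrictMono C₀) (hc : c ≠ 0)
    {r : Fin j} (hr : C₀ r = i.succ) (ha : ∀ t, C₀ t ≠ i.castSucc) :
    HasLowestMinor (M * Yb n (i+1) c) R (update C₀ r i.castSucc) u := by
  rw [Yb_eq, ← Matrix.mul_assoc, mul_ym]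
  convert (hM.updateCol_add_of_eq hC₀ i.castSucc_covBy_succ hr ha c).mul_diagonal _ using 1
  rw [Fintype.prod_eq_single r fun s hs => ?_]
  · simp only [update_self, if_true]
    field_simp
  · have hsb : C₀ s ≠ i.succ := fun h => hs (hC₀.injective (h.trans hr.symm))
    simp [update_of_ne hs, ha s, hsb]

end HasLowestMinor

/-- The (0-based) columns `m, m+1, …, m+j-1` with the first `u` of them lowered by one. The
clamp at `n` spares a bound proof and is inactive wherever the interval is used. -/
def shiftedInterval (j n m u : ℕ) (s : Fin j) : Fin (n+1) :=
  ⟨min (if (s : ℕ) < u then m + s - 1 else m + s) n, Nat.lt_succ_of_le (min_le_right _ _)⟩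

section ShiftedInterval

variable {n j m u : ℕ}

theorem shiftedInterval_val (s : Fin j) :
    (shiftedInterval j n m u s : ℕ) = min (if (s : ℕ) < u then m + s - 1 else m + s) n :=
  rfl

theorem shiftedInterval_strictMono (hmj : m + j ≤ n + 1) (hm : 1 ≤ m ∨ u = 0) :
    StrictMono (shiftedInterval j n m u) := by
  intro s t hst
  rw [Fin.lt_def] at hst ⊢
  simp only [shiftedInterval_val]
  split_ifs <;> omega

theorem shiftedInterval_self (hm : 1 ≤ m) :
    shiftedInterval j n m j = shiftedInterval j n (m-1) 0 := by
  funext s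
  ext
  simp only [shiftedInterval_val]
  split_ifs <;> omega

end ShiftedInterval

/-- The `k`-th factor `𝐲_1(x_1) ⋯ 𝐲_L(x_L)` of `Θ`, for `x = c_{k,·}` and `L = n + 1 - k`. -/
noncomputable def yRun (n : ℕ) (x : ℕ → ℂ) (L : ℕ) : Matrix (Fin (n+1)) (Fin (n+1)) ℂ :=
  ((List.range L).map fun l => Yb n (l+1) (x (l+1))).prod

theorem yRun_succ (n : ℕ) (x : ℕ → ℂ) (L : ℕ) :
    yRun n x (L+1) = yRun n x L * Yb n (L+1) (x (L+1)) :=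
  List.prod_range_succ _ _

namespace HasLowestMinor

variable {n j : ℕ} {ι : Type*} {M : Matrix ι (Fin (n+1)) ℂ} {R : Fin j → ι} {u : ℂ}
  {x : ℕ → ℂ}

theorem mul_yRun_of_lt (hM : HasLowestMinor M R (shiftedInterval j n 0 0) u) (hjn : j ≤ n + 1)
    {L : ℕ} (hL : L < j) (hx : ∀ l < L, x (l+1) ≠ 0) :
    HasLowestMinor (M * yRun n x L) R (shiftedInterval j n 0 0) u := by
  induction L with
  | zero => simpa [yRun] using hM
  | succ L ih =>
    rw [yRun_succ, ← Matrix.mul_assoc]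
    have hmem (k : ℕ) (hk : k < j) :
        (⟨k, by omega⟩ : Fin (n+1)) ∈ range (shiftedInterval j n 0 0) :=
      ⟨⟨k, hk⟩, by ext; simp [shiftedInterval_val]; omega⟩
    exact (ih (by omega) fun l hl => hx l (by omega)).mul_Yb (i := ⟨L, by omega⟩)
      (shiftedInterval_strictMono (by omega) (Or.inr rfl)) (hx L (by omega))
      (iff_of_true (hmem L (by omega)) (hmem (L+1) hL))

theorem mul_yRun_shift {m : ℕ} (hM : HasLowestMinor M R (shiftedInterval j n m 0) u)
    (hm : 1 ≤ m) (hmj : m + j ≤ n + 1) (hx : ∀ l < m + j - 1, x (l+1) ≠ 0) :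
    HasLowestMinor (M * yRun n x (m + j - 1)) R (shiftedInterval j n (m-1) 0) u := by
  suffices ∀ t ≤ m + j - 1,
      HasLowestMinor (M * yRun n x t) R (shiftedInterval j n m (t + 1 - m)) u by
    simpa [show m + j - 1 + 1 - m = j by omega, shiftedInterval_self hm] using
      this (m + j - 1) le_rfl
  intro t ht
  induction t with
  | zero => simpa [yRun, show 1 - m = 0 by omega] using hM
  | succ t ih =>
    rw [yRun_succ, ← Matrix.mul_assoc]
    obtain ⟨i, hi⟩ : ∃ i : Fin n, (i : ℕ) = t := ⟨⟨t, by omega⟩, rfl⟩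
    rw [show Yb n (t+1) = Yb n (i+1) by rw [hi]]
    have hmono := shiftedInterval_strictMono (u := t + 1 - m) hmj (Or.inl hm)
    have hc := hx t (by omega)
    by_cases hpre : t + 2 ≤ m
    · have hout (k : Fin (n+1)) (hk : (k : ℕ) < m) :
          k ∉ range (shiftedInterval j n m (t + 1 - m)) := by
        rintro ⟨s, hs⟩
        rw [Fin.ext_iff, shiftedInterval_val] at hs
        split_ifs at hs <;> omega
      rw [show t + 1 + 1 - m = t + 1 - m by omega]
      exact (ih (by omega)).mul_Yb hmono hc
        (iff_of_false (hout _ (by simp; omega)) (hout _ (by simp; omega)))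
    · have hu : t + 1 - m < j := by omega
      have hr : shiftedInterval j n m (t + 1 - m) ⟨t + 1 - m, hu⟩ = i.succ := by
        ext; simp only [shiftedInterval_val, Fin.val_succ]; split_ifs <;> omega
      have ha (s : Fin j) : shiftedInterval j n m (t + 1 - m) s ≠ i.castSucc := by
        rw [Ne, Fin.ext_iff, shiftedInterval_val, Fin.val_castSucc]
        split_ifs <;> omega
      have hupd : update (shiftedInterval j n m (t + 1 - m)) ⟨t + 1 - m, hu⟩ i.castSucc
          = shiftedInterval j n m (t + 1 + 1 - m) := by
        funext s
        rcases eq_or_ne s ⟨t + 1 - m, hu⟩ with rfl | hs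
        · ext
          simp only [update_self, shiftedInterval_val, Fin.val_castSucc]
          split_ifs <;> omega
        · rw [update_of_ne hs]
          have hs' : (s : ℕ) ≠ t + 1 - m := fun h => hs (Fin.ext h)
          ext; simp only [shiftedInterval_val]; split_ifs <;> omega
      rw [← hupd]
      exact (ih (by omega)).mul_Yb_of_eq hmono hc hr ha

end HasLowestMinor

theorem hasLowestMinor_theta_prefix {n j : ℕ} (hjn : j ≤ n) (c : ℕ → ℕ → ℂ)
    (hc : ∀ k l, 1 ≤ k → 1 ≤ l → k + l ≤ n + 1 → c k l ≠ 0) {K : ℕ} (hK : K ≤ n) :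
    HasLowestMinor (((List.range K).map fun k => yRun n (c (k+1)) (n - k)).prod)
      (shiftedInterval j n (n + 1 - j) 0) (shiftedInterval j n (n + 1 - j - K) 0) (1 : ℂ) := by
  induction K with
  | zero => simpa using HasLowestMinor.one (shiftedInterval_strictMono (by omega) (Or.inr rfl))
  | succ K ih =>
    rw [List.prod_range_succ]
    have hx (l : ℕ) (hl : l < n - K) : c (K+1) (l+1) ≠ 0 :=
      hc _ _ (by omega) (by omega) (by omega)
    by_cases hm : 1 ≤ n + 1 - j - K
    · have hlen : n + 1 - j - K + j - 1 = n - K := by omega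
      have := (ih (by omega)).mul_yRun_shift hm (by omega) (hlen ▸ hx)
      rwa [hlen, show n + 1 - j - K - 1 = n + 1 - j - (K+1) by omega] at this
    · rw [show n + 1 - j - (K+1) = 0 by omega]
      rw [show n + 1 - j - K = 0 by omega] at ih
      exact (ih (by omega)).mul_yRun_of_lt (by omega) (by omega) hx

theorem hasLowestMinor_theta {n j : ℕ} (hj : 1 ≤ j) (hjn : j ≤ n) (c : ℕ → ℕ → ℂ)
    (hc : ∀ k l, 1 ≤ k → 1 ≤ l → k + l ≤ n + 1 → c k l ≠ 0) :
    HasLowestMinor (Theta n c) (shiftedInterval j n (n + 1 - j) 0) (shiftedInterval j n 0 0)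
      1 := by
  have h := hasLowestMinor_theta_prefix hjn c hc le_rfl
  rwa [show n + 1 - j - n = 0 by omega] at h

/-- For every `1 ≤ j ≤ n`, the principal generalized minor `Δ_{w₀Λ_j, Λ_j}(Θ(c))`, i.e. the
minor of `Θ(c)` on rows `{n+2−j, …, n+1}` and columns `{1, 2, …, j}`, equals `1`. -/
theorem stmt2 (n j : ℕ) (hj : 1 ≤ j) (hjn : j ≤ n)
    (c : ℕ → ℕ → ℂ) (hc : ∀ k l, 1 ≤ k → 1 ≤ l → k + l ≤ n + 1 → c k l ≠ 0) :
    ((Theta n c).submatrix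
        (fun a : Fin j => (⟨n + 1 - j + (a : ℕ), by have := a.isLt; omega⟩ : Fin (n+1)))
        (fun a : Fin j => (⟨(a : ℕ), by have := a.isLt; omega⟩ : Fin (n+1)))).det
      = 1 := by
  convert (hasLowestMinor_theta hj hjn c hc).1 using 3
  all_goals funext s; ext; have := s.isLt; simp [shiftedInterval_val]; omega
end

section
/- Let 1 ≤ i ≤ n and let c_1, …, c_i be nonzero complex numbers. The matrix M := 𝐱_i(c_i)·𝐱_{i−1}(c_{i−1})⋯𝐱_1(c_1) ∈ SL_{n+1}(ℂ) acts on the standard basis e_1, …, e_{n+1} by: M e_1 = c_1^{−1} e_1; M e_k = (c_{k−1}/c_k) e_k + e_{k−1} for 2 ≤ k ≤ i; M e_{i+1} = c_i e_{i+1} + e_i; and M e_k = e_k for k > i+1. -/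
/-! Each `𝐱_j(c)` scales `e_j` by `c⁻¹`, sends `e_{j+1}` to `c e_{j+1} + e_j` and fixes every
other `e_k`. Hence in `𝐱_i(c_i) ⋯ 𝐱_1(c_1) e_k` only the factors `𝐱_{k-1}` and `𝐱_k` act
nontrivially, in that order, and all later factors fix the result. -/

open Matrix

/-- The upper unipotent one-parameter element `x_i(c) = I + c E_{i,i+1}` (1-based `i`). -/
noncomputable def xm (n i : ℕ) (c : ℂ) : Matrix (Fin (n+1)) (Fin (n+1)) ℂ :=
  1 + c • Em n i (i+1)

/-- `𝐱_i(c) = α_i^∨(c⁻¹) · x_i(c)`. -/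
noncomputable def Xb (n i : ℕ) (c : ℂ) : Matrix (Fin (n+1)) (Fin (n+1)) ℂ :=
  alco n i c⁻¹ * xm n i c

/-- The standard basis vector `e_k` of `ℂ^{n+1}` in 1-based indexing. -/
def stdv (n k : ℕ) : Fin (n+1) → ℂ := fun a => if (a : ℕ) + 1 = k then 1 else 0

lemma Em_eq_vecMulVec (n k l : ℕ) : Em n k l = vecMulVec (stdv n k) (stdv n l) := by
  ext a b
  simp only [Em, stdv, vecMulVec_apply, of_apply, ite_and, mul_ite, mul_one, mul_zero]
  split_ifs <;> rfl

lemma stdv_eq_single (n k : ℕ) (hk : 1 ≤ k) (hkn : k ≤ n + 1) :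
    stdv n k = Pi.single (⟨k - 1, by omega⟩ : Fin (n+1)) 1 := by
  ext a
  simp only [stdv, Pi.single_apply, Fin.ext_iff]
  split_ifs <;> first | rfl | omega

lemma stdv_dotProduct_stdv_self (n l : ℕ) (hl : 1 ≤ l) (hln : l ≤ n + 1) :
    stdv n l ⬝ᵥ stdv n l = 1 := by
  rw [stdv_eq_single n l hl hln, single_one_dotProduct, Pi.single_eq_same]

lemma stdv_dotProduct_stdv_of_ne (n k l : ℕ) (h : k ≠ l) : stdv n l ⬝ᵥ stdv n k = 0 := by
  refine Finset.sum_eq_zero fun a _ => ?_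
  simp only [stdv, mul_ite, mul_one, mul_zero]
  split_ifs <;> first | rfl | omega

lemma xm_mulVec_stdv_of_ne (n j k : ℕ) (c : ℂ) (h : k ≠ j + 1) :
    xm n j c *ᵥ stdv n k = stdv n k := by
  rw [xm, add_mulVec, one_mulVec, smul_mulVec, Em_eq_vecMulVec, vecMulVec_mulVec,
    stdv_dotProduct_stdv_of_ne n k (j+1) h, MulOpposite.op_zero, zero_smul, smul_zero, add_zero]

lemma xm_mulVec_stdv_succ (n j : ℕ) (c : ℂ) (hj : j ≤ n) :
    xm n j c *ᵥ stdv n (j+1) = stdv n (j+1) + c • stdv n j := by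
  rw [xm, add_mulVec, one_mulVec, smul_mulVec, Em_eq_vecMulVec, vecMulVec_mulVec,
    stdv_dotProduct_stdv_self n (j+1) (by omega) (by omega), MulOpposite.op_one, one_smul]

lemma alco_mulVec_stdv (n j k : ℕ) (d : ℂ) :
    alco n j d *ᵥ stdv n k =
      (if k = j then d else if k = j + 1 then d⁻¹ else 1) • stdv n k := by
  ext a
  simp only [alco, mulVec_diagonal, stdv, Pi.smul_apply, smul_eq_mul]
  split_ifs <;> simp_all

lemma Xb_mulVec_stdv_self (n j : ℕ) (c : ℂ) : Xb n j c *ᵥ stdv n j = c⁻¹ • stdv n j := by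
  rw [Xb, ← mulVec_mulVec, xm_mulVec_stdv_of_ne n j j c (by omega), alco_mulVec_stdv, if_pos rfl]

lemma Xb_mulVec_stdv_succ (n j : ℕ) (c : ℂ) (hj : j ≤ n) (hc : c ≠ 0) :
    Xb n j c *ᵥ stdv n (j+1) = c • stdv n (j+1) + stdv n j := by
  rw [Xb, ← mulVec_mulVec, xm_mulVec_stdv_succ n j c hj, mulVec_add, mulVec_smul,
    alco_mulVec_stdv, alco_mulVec_stdv, if_neg (by omega), if_pos rfl, if_pos rfl, inv_inv,
    smul_smul, mul_inv_cancel₀ hc, one_smul]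

lemma Xb_mulVec_stdv_of_ne (n j k : ℕ) (c : ℂ) (hj : k ≠ j) (hj' : k ≠ j + 1) :
    Xb n j c *ᵥ stdv n k = stdv n k := by
  rw [Xb, ← mulVec_mulVec, xm_mulVec_stdv_of_ne n j k c hj', alco_mulVec_stdv, if_neg hj,
    if_neg hj', one_smul]

/-- `𝐱_i(c_i) ⋯ 𝐱_1(c_1)`. -/
noncomputable def xbProd (n i : ℕ) (c : ℕ → ℂ) : Matrix (Fin (n+1)) (Fin (n+1)) ℂ :=
  ((List.range i).map fun k => Xb n (i - k) (c (i - k))).prod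

lemma xbProd_zero (n : ℕ) (c : ℕ → ℂ) : xbProd n 0 c = 1 := rfl

lemma xbProd_succ (n i : ℕ) (c : ℕ → ℂ) :
    xbProd n (i+1) c = Xb n (i+1) (c (i+1)) * xbProd n i c := by
  rw [xbProd, xbProd, List.range_succ_eq_map, List.map_cons, List.prod_cons, List.map_map]
  congr 3
  funext k
  simp only [Function.comp_apply, Nat.succ_sub_succ]

lemma xbProd_mulVec_eq_of_forall_mulVec_eq (n a i : ℕ) (c : ℕ → ℂ) (hai : a ≤ i)
    (v w : Fin (n+1) → ℂ) (hv : xbProd n a c *ᵥ v = w)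
    (hw : ∀ j, a < j → j ≤ i → Xb n j (c j) *ᵥ w = w) :
    xbProd n i c *ᵥ v = w := by
  induction i, hai using Nat.le_induction with
  | base => exact hv
  | succ i hai ih =>
    rw [xbProd_succ, ← mulVec_mulVec, ih fun j h1 h2 => hw j h1 (by omega),
      hw (i+1) (by omega) le_rfl]

lemma xbProd_mulVec_stdv_of_lt (n i k : ℕ) (c : ℕ → ℂ) (hk : i + 1 < k) :
    xbProd n i c *ᵥ stdv n k = stdv n k :=
  xbProd_mulVec_eq_of_forall_mulVec_eq n 0 i c i.zero_le _ _ (one_mulVec _)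
    fun j _ hj => Xb_mulVec_stdv_of_ne n j k _ (by omega) (by omega)

lemma xbProd_mulVec_stdv_succ (n i : ℕ) (c : ℕ → ℂ) (hi : 1 ≤ i) (hin : i ≤ n)
    (hc : c i ≠ 0) :
    xbProd n i c *ᵥ stdv n (i+1) = c i • stdv n (i+1) + stdv n i := by
  obtain ⟨i, rfl⟩ := Nat.exists_eq_add_of_le' hi
  rw [xbProd_succ, ← mulVec_mulVec, xbProd_mulVec_stdv_of_lt n i _ c (by omega),
    Xb_mulVec_stdv_succ n _ _ hin hc]

lemma xbProd_mulVec_stdv_one (n i : ℕ) (c : ℕ → ℂ) (hi : 1 ≤ i) :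
    xbProd n i c *ᵥ stdv n 1 = (c 1)⁻¹ • stdv n 1 :=
  xbProd_mulVec_eq_of_forall_mulVec_eq n 1 i c hi _ _
    (by rw [xbProd_succ, xbProd_zero, mul_one, Xb_mulVec_stdv_self])
    fun j hj _ => by rw [mulVec_smul, Xb_mulVec_stdv_of_ne n j 1 _ (by omega) (by omega)]

lemma xbProd_mulVec_stdv (n i k : ℕ) (c : ℕ → ℂ) (hk : 2 ≤ k) (hki : k ≤ i)
    (hin : i ≤ n) (hc : c (k-1) ≠ 0) :
    xbProd n i c *ᵥ stdv n k = (c (k-1) / c k) • stdv n k + stdv n (k-1) := by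
  obtain ⟨k, rfl⟩ := Nat.exists_eq_add_of_le' (show 1 ≤ k by omega)
  rw [Nat.add_sub_cancel] at hc ⊢
  refine xbProd_mulVec_eq_of_forall_mulVec_eq n (k+1) i c hki _ _ ?_ fun j hj _ => ?_
  · rw [xbProd_succ, ← mulVec_mulVec, xbProd_mulVec_stdv_succ n k c (by omega) (by omega) hc,
      mulVec_add, mulVec_smul, Xb_mulVec_stdv_self,
      Xb_mulVec_stdv_of_ne n _ k _ (by omega) (by omega), smul_smul, div_eq_mul_inv]
  · rw [mulVec_add, mulVec_smul, Xb_mulVec_stdv_of_ne n j _ _ (by omega) (by omega),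
      Xb_mulVec_stdv_of_ne n j _ _ (by omega) (by omega)]

theorem stmt3_general (n i : ℕ) (hi : 1 ≤ i) (hin : i ≤ n)
    (c : ℕ → ℂ) (hc : ∀ k, 1 ≤ k → k ≤ i → c k ≠ 0) :
    ∀ M : Matrix (Fin (n+1)) (Fin (n+1)) ℂ,
      M = ((List.range i).map fun k => Xb n (i - k) (c (i - k))).prod →
      (M.mulVec (stdv n 1) = (c 1)⁻¹ • stdv n 1) ∧
      (∀ k, 2 ≤ k → k ≤ i →
        M.mulVec (stdv n k) = (c (k-1) / c k) • stdv n k + stdv n (k-1)) ∧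
      (M.mulVec (stdv n (i+1)) = c i • stdv n (i+1) + stdv n i) ∧
      (∀ k, i + 1 < k → k ≤ n + 1 → M.mulVec (stdv n k) = stdv n k) := by
  rintro M rfl
  exact ⟨xbProd_mulVec_stdv_one n i c hi,
    fun k hk hki => xbProd_mulVec_stdv n i k c hk hki hin (hc (k-1) (by omega) (by omega)),
    xbProd_mulVec_stdv_succ n i c hi hin (hc i hi le_rfl),
    fun k hk _ => xbProd_mulVec_stdv_of_lt n i k c hk⟩

/-- Let `1 ≤ i ≤ n` and `c_1, …, c_i` nonzero. The matrix
`M = 𝐱_i(c_i)·𝐱_{i−1}(c_{i−1})⋯𝐱_1(c_1)` acts on the standard basis by: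
`M e_1 = c_1⁻¹ e_1`; `M e_k = (c_{k−1}/c_k) e_k + e_{k−1}` for `2 ≤ k ≤ i`;
`M e_{i+1} = c_i e_{i+1} + e_i`; and `M e_k = e_k` for `k > i+1`. -/
theorem stmt3 (n i : ℕ) (hn : 1 ≤ n) (hi : 1 ≤ i) (hin : i ≤ n)
    (c : ℕ → ℂ) (hc : ∀ k, 1 ≤ k → k ≤ i → c k ≠ 0) :
    ∀ M : Matrix (Fin (n+1)) (Fin (n+1)) ℂ,
      M = ((List.range i).map fun k => Xb n (i - k) (c (i - k))).prod →
      (M.mulVec (stdv n 1) = (c 1)⁻¹ • stdv n 1) ∧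
      (∀ k, 2 ≤ k → k ≤ i →
        M.mulVec (stdv n k) = (c (k-1) / c k) • stdv n k + stdv n (k-1)) ∧
      (M.mulVec (stdv n (i+1)) = c i • stdv n (i+1) + stdv n i) ∧
      (∀ k, i + 1 < k → k ≤ n + 1 → M.mulVec (stdv n k) = stdv n k) :=
  stmt3_general n i hi hin c hc
end

section
/- Fix 1 ≤ j ≤ n and let M_j := X^{(j+1)} X^{(j+2)} ⋯ X^{(n)}, where X^{(k)} := 𝐱_k(c_{n+1−k,k})·𝐱_{k−1}(c_{n+1−k,k−1})⋯𝐱_1(c_{n+1−k,1}) (so M_j is the identity when j = n). Then for every j-element subset S ⊆ {1, 2, …, j+1}, the minor of M_j on rows S and columns {n+2−j, …, n+1} equals 1 if S = {2, 3, …, j+1}, and equals 0 for every other such S. Equivalently, the j-th exterior power of M_j maps e_{n+2−j} ∧ ⋯ ∧ e_{n+1} to e_2 ∧ ⋯ ∧ e_{j+1} plus a combination of wedges e_{i_1} ∧ ⋯ ∧ e_{i_j} with i_j > j+1. -/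
open Matrix

/-- `X^{(k)} = 𝐱_k(c_{n+1−k,k})·𝐱_{k−1}(c_{n+1−k,k−1})⋯𝐱_1(c_{n+1−k,1})`. -/
noncomputable def Xfac (n k : ℕ) (c : ℕ → ℕ → ℂ) : Matrix (Fin (n+1)) (Fin (n+1)) ℂ :=
  ((List.range k).map fun l => Xb n (k - l) (c (n + 1 - k) (k - l))).prod

/-- `M_j = X^{(j+1)} X^{(j+2)} ⋯ X^{(n)}` (the identity when `j = n`). -/
noncomputable def Mjmat (n j : ℕ) (c : ℕ → ℕ → ℂ) : Matrix (Fin (n+1)) (Fin (n+1)) ℂ :=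
  ((List.range (n - j)).map fun l => Xfac n (j + 1 + l) c).prod

/-! The torus factor of `𝐱_i(c)` cancels `c` on the superdiagonal, so each `X^{(k)}` is upper
bidiagonal with superdiagonal entries `1` in rows `1, …, k`. Multiplying by such a matrix turns a
vector `e_s + (combination of e_i, i > s)` into `e_{s-1} + (combination of e_i, i > s - 1)`, hence
`M_j e_{n+2-j+t} = e_{t+2} + (combination of e_i, i > t + 2)`. On rows `{2, …, j+1}` the minor is
therefore unitriangular, and every other admissible `S` contains row `1`, which vanishes on these
columns. -/

namespace Matrix

variable {ι R : Type*} [Fintype ι] [NonUnitalNonAssocSemiring R]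

theorem mul_apply_of_row_eq_zero_of_ne {A B : Matrix ι ι R} {a : ι}
    (hA : ∀ x, x ≠ a → A a x = 0) (b : ι) : (A * B) a b = A a a * B a b := by
  rw [mul_apply]
  exact Fintype.sum_eq_single a fun x hx => by rw [hA x hx, zero_mul]

theorem mul_apply_of_row_eq_zero_of_ne_of_ne {A B : Matrix ι ι R} {a a' : ι} (ha : a ≠ a')
    (hA : ∀ x, x ≠ a → x ≠ a' → A a x = 0) (b : ι) :
    (A * B) a b = A a a * B a b + A a a' * B a' b := by
  rw [mul_apply]
  exact Fintype.sum_eq_add a a' ha fun x hx => by rw [hA x hx.1 hx.2, zero_mul]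

end Matrix

theorem Xb_apply_self (n i : ℕ) (c : ℂ) (a : Fin (n+1)) :
    Xb n i c a a = if (a : ℕ) + 1 = i then c⁻¹ else if (a : ℕ) = i then c else 1 := by
  by_cases h : (a : ℕ) + 1 = i
  · subst h; simp [Xb, alco, xm, Em, Matrix.diagonal_mul]
  · simp [Xb, alco, xm, Em, Matrix.diagonal_mul, h]

theorem Xb_apply_of_ne {n i : ℕ} {c : ℂ} (hc : c ≠ 0) {a b : Fin (n+1)} (hab : b ≠ a) :
    Xb n i c a b = if (a : ℕ) + 1 = i ∧ (b : ℕ) = i then 1 else 0 := by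
  simp only [Xb, alco, xm, Em, Matrix.diagonal_mul, Matrix.add_apply, Matrix.one_apply_ne' hab,
    Matrix.smul_apply, Matrix.of_apply, smul_eq_mul, Nat.add_right_cancel_iff, zero_add]
  split_ifs <;> simp_all

theorem Xb_apply_self_of_ne {n i : ℕ} {c : ℂ} {a : Fin (n+1)} (h : (a : ℕ) + 1 ≠ i) :
    Xb n i c a a = if (a : ℕ) = i then c else 1 := by
  rw [Xb_apply_self, if_neg h]

/-- `𝐱_k(f k) ⋯ 𝐱_1(f 1)`, so that `Xfac n k c = XbProd n k (c (n + 1 - k))`. -/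
noncomputable def XbProd (n k : ℕ) (f : ℕ → ℂ) : Matrix (Fin (n+1)) (Fin (n+1)) ℂ :=
  ((List.range k).map fun l => Xb n (k - l) (f (k - l))).prod

section XbProd

variable {n k : ℕ} {f : ℕ → ℂ}

theorem XbProd_zero : XbProd n 0 f = 1 := rfl

theorem XbProd_succ : XbProd n (k+1) f = Xb n (k+1) (f (k+1)) * XbProd n k f := by
  rw [XbProd, List.range_succ_eq_map, List.map_cons, List.prod_cons, List.map_map]
  simp only [Function.comp_def, Nat.sub_zero, Nat.succ_sub_succ]
  rfl

theorem XbProd_succ_apply_of_ne (hf : f (k+1) ≠ 0) {a : Fin (n+1)} (ha : (a : ℕ) ≠ k)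
    (b : Fin (n+1)) :
    XbProd n (k+1) f a b = (if (a : ℕ) = k + 1 then f (k+1) else 1) * XbProd n k f a b := by
  have hrow : ∀ x, x ≠ a → Xb n (k+1) (f (k+1)) a x = 0 := fun x hx => by
    rw [Xb_apply_of_ne hf hx, if_neg (by omega)]
  rw [XbProd_succ, Matrix.mul_apply_of_row_eq_zero_of_ne hrow, Xb_apply_self_of_ne (by omega)]

theorem XbProd_succ_apply_of_eq (hf : f (k+1) ≠ 0) {a a' : Fin (n+1)} (ha : (a : ℕ) = k)
    (ha' : (a' : ℕ) = k + 1) (b : Fin (n+1)) :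
    XbProd n (k+1) f a b = (f (k+1))⁻¹ * XbProd n k f a b + XbProd n k f a' b := by
  have hrow : ∀ x, x ≠ a → x ≠ a' → Xb n (k+1) (f (k+1)) a x = 0 := fun x hx hx' => by
    rw [Xb_apply_of_ne hf hx, if_neg fun h => hx' (Fin.ext (by omega))]
  rw [XbProd_succ, Matrix.mul_apply_of_row_eq_zero_of_ne_of_ne (Fin.ne_of_val_ne (by omega)) hrow,
    Xb_apply_self, if_pos (by omega), Xb_apply_of_ne hf (Fin.ne_of_val_ne (by omega)),
    if_pos (by omega), one_mul]

theorem XbProd_apply (hk : k ≤ n) (hf : ∀ i, 1 ≤ i → i ≤ k → f i ≠ 0) :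
    (∀ a b : Fin (n+1), b ≠ a →
      XbProd n k f a b = if (b : ℕ) = a + 1 ∧ (a : ℕ) < k then 1 else 0) ∧
    ∀ a : Fin (n+1), k < a → XbProd n k f a a = 1 := by
  induction k with
  | zero =>
    refine ⟨fun a b hab => ?_, fun a _ => ?_⟩
    · rw [XbProd_zero, Matrix.one_apply_ne' hab, if_neg (by omega)]
    · rw [XbProd_zero, Matrix.one_apply_eq]
  | succ k ih =>
    obtain ⟨ih_ne, ih_self⟩ := ih (by omega) fun i h1 h2 => hf i h1 (by omega)
    have hfk : f (k+1) ≠ 0 := hf (k+1) (by omega) le_rfl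
    refine ⟨fun a b hab => ?_, fun a ha => ?_⟩
    · by_cases hak : (a : ℕ) = k
      · obtain ⟨a', ha'⟩ : ∃ a' : Fin (n+1), (a' : ℕ) = k + 1 := ⟨⟨k + 1, by omega⟩, rfl⟩
        rw [XbProd_succ_apply_of_eq hfk hak ha', ih_ne a b hab, if_neg (by omega), mul_zero,
          zero_add]
        by_cases hb : b = a'
        · rw [hb, ih_self a' (by omega), if_pos (by omega)]
        · have hb' : (b : ℕ) ≠ k + 1 := fun h => hb (Fin.ext (by omega))
          rw [ih_ne a' b hb, if_neg (by omega), if_neg (by omega)]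
      · rw [XbProd_succ_apply_of_ne hfk hak, ih_ne a b hab]
        split_ifs <;> simp_all <;> omega
    · rw [XbProd_succ_apply_of_ne hfk (by omega), if_neg (by omega), ih_self a (by omega), one_mul]

end XbProd

theorem Xfac_apply_of_ne {n k : ℕ} {c : ℕ → ℕ → ℂ} (hk : k ≤ n)
    (hc : ∀ i, 1 ≤ i → i ≤ k → c (n + 1 - k) i ≠ 0) {a b : Fin (n+1)} (hab : b ≠ a) :
    Xfac n k c a b = if (b : ℕ) = a + 1 ∧ (a : ℕ) < k then 1 else 0 :=
  (XbProd_apply hk hc).1 a b hab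

theorem list_prod_map_range_apply_of_superdiagonal_rows {m : ℕ} {R : Type*} [Semiring R]
    (r : ℕ) : ∀ (s : ℕ) (F : ℕ → Matrix (Fin m) (Fin m) R),
    (∀ l < r, ∀ a x : Fin m, (a : ℕ) ≤ s + l → x ≠ a →
      F l a x = if (x : ℕ) = a + 1 then 1 else 0) →
    ∀ a b : Fin m, (a : ℕ) ≤ s → (b : ℕ) = r + s →
      ((List.range r).map F).prod a b = if (a : ℕ) = s then 1 else 0 := by
  induction r with
  | zero =>
    intro s F _ a b _ hb
    simp [Matrix.one_apply, Fin.ext_iff, hb]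
  | succ r ih =>
    intro s F hF a b ha hb
    obtain ⟨a', ha'⟩ : ∃ a' : Fin m, (a' : ℕ) = a + 1 := ⟨⟨a + 1, by omega⟩, rfl⟩
    have hrow : ∀ x, x ≠ a → x ≠ a' → F 0 a x = 0 := fun x hx hx' => by
      rw [hF 0 (by omega) a x ha hx, if_neg fun h => hx' (Fin.ext (by omega))]
    have hF' : ∀ l < r, ∀ a x : Fin m, (a : ℕ) ≤ s + 1 + l → x ≠ a →
        (F ∘ Nat.succ) l a x = if (x : ℕ) = a + 1 then 1 else 0 := fun l hl a x h =>
      hF (l + 1) (by omega) a x (by omega)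
    rw [List.range_succ_eq_map, List.map_cons, List.prod_cons, List.map_map,
      Matrix.mul_apply_of_row_eq_zero_of_ne_of_ne (Fin.ne_of_val_ne (by omega)) hrow,
      ih (s + 1) (F ∘ Nat.succ) hF' a b (by omega) (by omega),
      ih (s + 1) (F ∘ Nat.succ) hF' a' b (by omega) (by omega),
      hF 0 (by omega) a a' ha (Fin.ne_of_val_ne (by omega)), if_pos ha', if_neg (by omega)]
    simp only [mul_zero, zero_add, one_mul, ha', Nat.add_right_cancel_iff]

theorem Mjmat_apply {n j : ℕ} (hjn : j ≤ n) {c : ℕ → ℕ → ℂ}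
    (hc : ∀ a b, 1 ≤ a → 1 ≤ b → a + b ≤ n + 1 → c a b ≠ 0) {t : ℕ} (ht : t < j)
    (a b : Fin (n+1)) (ha : (a : ℕ) ≤ t + 1) (hb : (b : ℕ) = n + 1 - j + t) :
    Mjmat n j c a b = if (a : ℕ) = t + 1 then 1 else 0 := by
  refine list_prod_map_range_apply_of_superdiagonal_rows (n - j) (t + 1) _
    (fun l hl a x ha hx => ?_) a b ha (by omega)
  rw [Xfac_apply_of_ne (by omega) (fun i h1 h2 => hc _ i (by omega) h1 (by omega)) hx]
  exact if_congr (and_iff_left (by omega)) rfl rfl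

theorem Matrix.det_eq_one_of_lowerUnitriangular {ι R : Type*} [Fintype ι] [DecidableEq ι]
    [LinearOrder ι] [CommRing R] {M : Matrix ι ι R}
    (hM : ∀ i j, i ≤ j → M i j = if i = j then 1 else 0) : M.det = 1 := by
  rw [Matrix.det_of_isLowerTriangular M fun i j (hij : i < j) => by
    rw [hM i j hij.le, if_neg hij.ne]]
  exact Finset.prod_eq_one fun i _ => by rw [hM i i le_rfl, if_pos rfl]

section Interval

open Finset

variable {n j : ℕ}

theorem card_filter_one_le_le (hjn : j ≤ n) :
    (univ.filter fun a : Fin (n+1) => 1 ≤ (a : ℕ) ∧ (a : ℕ) ≤ j).card = j := by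
  have hval : (univ.filter fun a : Fin (n+1) => 1 ≤ (a : ℕ) ∧ (a : ℕ) ≤ j).map Fin.valEmbedding =
      Icc 1 j := by
    ext x
    simp only [mem_map, mem_filter, mem_univ, true_and, Fin.valEmbedding_apply, mem_Icc]
    exact ⟨fun ⟨a, ha, hax⟩ => hax ▸ ha, fun hx => ⟨⟨x, by omega⟩, hx, rfl⟩⟩
  rw [← card_map Fin.valEmbedding, hval, Nat.card_Icc, Nat.add_sub_cancel]

theorem orderEmbOfFin_filter_one_le_le_apply (hjn : j ≤ n)
    (h : (univ.filter fun a : Fin (n+1) => 1 ≤ (a : ℕ) ∧ (a : ℕ) ≤ j).card = j) (r : Fin j) :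
    ((univ.filter fun a : Fin (n+1) => 1 ≤ (a : ℕ) ∧ (a : ℕ) ≤ j).orderEmbOfFin h r : ℕ) =
      r + 1 := by
  rw [← orderEmbOfFin_unique' h
    (f := (Fin.succOrderEmb j).trans (Fin.castLEOrderEmb (by omega))) fun r => by simp]
  simp

theorem zero_mem_of_ne_filter_one_le_le (hjn : j ≤ n) {S : Finset (Fin (n+1))}
    (hS : ∀ a ∈ S, (a : ℕ) ≤ j) (hcard : S.card = j)
    (hST : S ≠ univ.filter fun a : Fin (n+1) => 1 ≤ (a : ℕ) ∧ (a : ℕ) ≤ j) : 0 ∈ S := by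
  by_contra h0
  refine hST (eq_of_subset_of_card_le (fun a ha => ?_) (by rw [card_filter_one_le_le hjn, hcard]))
  have ha0 : (a : ℕ) ≠ 0 := fun h => h0 (Fin.ext (a := a) (b := 0) h ▸ ha)
  simp only [mem_filter, mem_univ, true_and]
  exact ⟨Nat.one_le_iff_ne_zero.2 ha0, hS a ha⟩

end Interval

/-- Indices are 0-based: `S ⊆ {0, …, j}` stands for a subset of `{1, …, j+1}`. -/
theorem stmt5 (n j : ℕ) (hj : 1 ≤ j) (hjn : j ≤ n)
    (c : ℕ → ℕ → ℂ) (hc : ∀ a b, 1 ≤ a → 1 ≤ b → a + b ≤ n + 1 → c a b ≠ 0)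
    (S : Finset (Fin (n+1))) (hS : ∀ a ∈ S, (a : ℕ) ≤ j) (hcard : S.card = j) :
    ((Mjmat n j c).submatrix
        (fun a : Fin j => ((S.orderIsoOfFin hcard a : Fin (n+1))))
        (fun a : Fin j => (⟨n + 1 - j + (a : ℕ), by have := a.isLt; omega⟩ : Fin (n+1)))).det
      = if S = Finset.univ.filter (fun a : Fin (n+1) => 1 ≤ (a : ℕ) ∧ (a : ℕ) ≤ j)
        then 1 else 0 := by
  have hentry : ∀ r t : Fin j, (S.orderEmbOfFin hcard r : ℕ) ≤ t + 1 →
      Mjmat n j c (S.orderEmbOfFin hcard r) ⟨n + 1 - j + t, by omega⟩ =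
        if (S.orderEmbOfFin hcard r : ℕ) = t + 1 then 1 else 0 :=
    fun r t h => Mjmat_apply hjn hc t.isLt _ _ h rfl
  simp only [Matrix.submatrix, Finset.coe_orderIsoOfFin_apply]
  split_ifs with hST
  · subst hST
    refine Matrix.det_eq_one_of_lowerUnitriangular fun r t hrt => ?_
    rw [Matrix.of_apply, hentry r t (by rw [orderEmbOfFin_filter_one_le_le_apply hjn]; omega),
      orderEmbOfFin_filter_one_le_le_apply hjn]
    simp [Fin.ext_iff]
  · have h0 : S.orderEmbOfFin hcard ⟨0, hj⟩ = 0 := by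
      rw [Finset.orderEmbOfFin_zero hcard hj]
      exact le_antisymm (S.min'_le 0 (zero_mem_of_ne_filter_one_le_le hjn hS hcard hST))
        (Fin.zero_le _)
    refine Matrix.det_eq_zero_of_row_eq_zero ⟨0, hj⟩ fun t => ?_
    rw [Matrix.of_apply, hentry _ t (by simp [h0]), h0]
    simp
end

section
/- Let λ_1, …, λ_n be nonnegative integers and let (x_{k,l})_{k+l ≤ n+1} be integers, with conventions x_{m,0} = 0 and x_{k,l} = 0 whenever k+l > n+1. Then the following two systems of inequalities are equivalent: (a) for every 1 ≤ j ≤ n, min_{1≤k≤j} ( x_{n−j+1,k} − x_{n−j+2,k−1} ) ≥ 0 and λ_j + min_{1≤k≤j} ( x_{j−k+1,k−1} − x_{j−k+1,k} ) ≥ 0; (b) for every 1 ≤ i ≤ n, x_{1,i} ≥ x_{2,i−1} ≥ ⋯ ≥ x_{i,1} ≥ 0, and for all 1 ≤ j ≤ i ≤ n, λ_i ≥ x_{j,i−j+1} − x_{j,i−j}. -/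
/-!
Both systems are the same two families of inequalities indexed differently. Unfolding the
minima, (a) says `x_{p+1,k-1} ≤ x_{p,k}` (with `p = n - j + 1`) and
`x_{p,k} - x_{p,k-1} ≤ λ_{p+k-1}` (with `p = j - k + 1`) for all `p, k ≥ 1`, `p + k ≤ n + 1`;
(b) is the same list written along the antidiagonals `p + k = i + 1`, where the comparison
`0 = x_{p+1,0} ≤ x_{p,1}` appears separately.
-/

open Finset

def AntidiagAntitone (n : ℕ) (x : ℕ → ℕ → ℤ) : Prop :=
  ∀ p k, 1 ≤ p → 1 ≤ k → p + k ≤ n + 1 → x (p + 1) (k - 1) ≤ x p k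

def RowIncrementsLE (n : ℕ) (lam : ℕ → ℕ) (x : ℕ → ℕ → ℤ) : Prop :=
  ∀ p k, 1 ≤ p → 1 ≤ k → p + k ≤ n + 1 → x p k - x p (k - 1) ≤ (lam (p + k - 1) : ℤ)

theorem forall_nonneg_inf'_iff_antidiagAntitone (n : ℕ) (x : ℕ → ℕ → ℤ) :
    (∀ j, (hj : 1 ≤ j) → j ≤ n →
        0 ≤ (Icc 1 j).inf' (nonempty_Icc.mpr hj)
              (fun k => x (n - j + 1) k - x (n - j + 2) (k - 1))) ↔
      AntidiagAntitone n x := by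
  simp only [le_inf'_iff, mem_Icc, sub_nonneg]
  constructor
  · intro h p k hp hk hpk
    have := h (n - p + 1) (by omega) (by omega) k ⟨hk, by omega⟩
    rwa [show n - (n - p + 1) + 2 = p + 1 by omega,
      show n - (n - p + 1) + 1 = p by omega] at this
  · intro h j _ hjn k hk
    exact h (n - j + 1) k (by omega) hk.1 (by omega)

theorem forall_lam_add_inf'_nonneg_iff_rowIncrementsLE (n : ℕ) (lam : ℕ → ℕ)
    (x : ℕ → ℕ → ℤ) :
    (∀ j, (hj : 1 ≤ j) → j ≤ n →
        0 ≤ (lam j : ℤ) + (Icc 1 j).inf' (nonempty_Icc.mpr hj)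
              (fun k => x (j - k + 1) (k - 1) - x (j - k + 1) k)) ↔
      RowIncrementsLE n lam x := by
  simp only [← neg_le_iff_add_nonneg', le_inf'_iff, mem_Icc, neg_le_sub_iff_le_add']
  constructor
  · intro h p k hp hk hpk
    have := h (p + k - 1) (by omega) (by omega) k ⟨hk, by omega⟩
    rw [show p + k - 1 - k + 1 = p by omega] at this
    linarith
  · intro h j _ hjn k hk
    have := h (j - k + 1) k (by omega) hk.1 (by omega)
    rw [show j - k + 1 + k - 1 = j by omega] at this
    linarith

theorem forall_antidiag_chain_iff_antidiagAntitone (n : ℕ) (x : ℕ → ℕ → ℤ)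
    (hx0 : ∀ m, x m 0 = 0) :
    (∀ i, 1 ≤ i → i ≤ n →
        (∀ j, 1 ≤ j → j < i → x (j + 1) (i - j) ≤ x j (i - j + 1)) ∧ 0 ≤ x i 1) ↔
      AntidiagAntitone n x := by
  constructor
  · intro h p k hp hk hpk
    rcases Nat.eq_or_lt_of_le hk with rfl | hk
    · simpa [hx0] using (h p hp (by omega)).2
    · have := (h (p + k - 1) (by omega) (by omega)).1 p hp (by omega)
      rwa [show p + k - 1 - p = k - 1 by omega, show k - 1 + 1 = k by omega] at this
  · intro h i hi hin
    refine ⟨fun j hj hji => ?_, by simpa [hx0] using h i 1 hi le_rfl (by omega)⟩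
    have := h j (i - j + 1) hj (by omega) (by omega)
    rwa [Nat.add_sub_cancel] at this

theorem forall_row_increment_le_iff_rowIncrementsLE (n : ℕ) (lam : ℕ → ℕ)
    (x : ℕ → ℕ → ℤ) :
    (∀ j i, 1 ≤ j → j ≤ i → i ≤ n → x j (i - j + 1) - x j (i - j) ≤ (lam i : ℤ)) ↔
      RowIncrementsLE n lam x := by
  constructor
  · intro h p k hp hk hpk
    have := h p (p + k - 1) hp (by omega) (by omega)
    rwa [show p + k - 1 - p + 1 = k by omega, show p + k - 1 - p = k - 1 by omega] at this
  · intro h j i hj hji hin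
    have := h j (i - j + 1) hj (by omega) (by omega)
    rwa [Nat.add_sub_cancel, show j + (i - j + 1) - 1 = i by omega] at this

theorem stmt7_general (n : ℕ) (lam : ℕ → ℕ) (x : ℕ → ℕ → ℤ)
    (hx0 : ∀ m, x m 0 = 0) :
    (∀ j, (hj : 1 ≤ j) → j ≤ n →
        0 ≤ Finset.inf' (Finset.Icc 1 j) (Finset.nonempty_Icc.mpr hj)
              (fun k => x (n - j + 1) k - x (n - j + 2) (k - 1)) ∧
        0 ≤ (lam j : ℤ) + Finset.inf' (Finset.Icc 1 j) (Finset.nonempty_Icc.mpr hj)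
              (fun k => x (j - k + 1) (k - 1) - x (j - k + 1) k))
    ↔
    ((∀ i, 1 ≤ i → i ≤ n →
        (∀ j, 1 ≤ j → j < i → x (j + 1) (i - j) ≤ x j (i - j + 1)) ∧ 0 ≤ x i 1) ∧
      (∀ j i, 1 ≤ j → j ≤ i → i ≤ n → x j (i - j + 1) - x j (i - j) ≤ (lam i : ℤ))) := by
  rw [forall_antidiag_chain_iff_antidiagAntitone n x hx0,
    forall_row_increment_le_iff_rowIncrementsLE, ← forall_nonneg_inf'_iff_antidiagAntitone,
    ← forall_lam_add_inf'_nonneg_iff_rowIncrementsLE]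
  simp only [forall_and]

/-- Equivalence of the ultra-discretized decoration inequalities `UD(f_B)(λ,x) ≥ 0` (system
(a)) with the defining inequalities of the polyhedral realization of `B(λ)` (system (b)), for
type `A_n`. Conventions `x_{m,0} = 0` and `x_{k,l} = 0` for `k+l > n+1` are hypotheses. -/
theorem stmt7 (n : ℕ) (hn : 1 ≤ n) (lam : ℕ → ℕ) (x : ℕ → ℕ → ℤ)
    (hx0 : ∀ m, x m 0 = 0) (hxout : ∀ k l, n + 1 < k + l → x k l = 0) :
    (∀ j, (hj : 1 ≤ j) → j ≤ n →
        0 ≤ Finset.inf' (Finset.Icc 1 j) (Finset.nonempty_Icc.mpr hj)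
              (fun k => x (n - j + 1) k - x (n - j + 2) (k - 1)) ∧
        0 ≤ (lam j : ℤ) + Finset.inf' (Finset.Icc 1 j) (Finset.nonempty_Icc.mpr hj)
              (fun k => x (j - k + 1) (k - 1) - x (j - k + 1) k))
    ↔
    ((∀ i, 1 ≤ i → i ≤ n →
        (∀ j, 1 ≤ j → j < i → x (j + 1) (i - j) ≤ x j (i - j + 1)) ∧ 0 ≤ x i 1) ∧
      (∀ j i, 1 ≤ j → j ≤ i → i ≤ n → x j (i - j + 1) - x j (i - j) ≤ (lam i : ℤ))) :=
  stmt7_general n lam x hx0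
end

section
/- Let (i_1, …, i_N) be any sequence in {1, …, n}, c_1, …, c_N nonzero complex numbers, t ∈ SL_{n+1}(ℂ) diagonal, and g = t·𝐲_{i_1}(c_1)⋯𝐲_{i_N}(c_N). Fix 1 ≤ i ≤ n with g_{i+1,i} ≠ 0, and set ε_i(g) = g_{i+1,i+1}/g_{i+1,i} and φ_i(g) = g_{i,i}/g_{i+1,i}. For m = 1, …, N let C_m := c_1^{a_{i_1,i}} c_2^{a_{i_2,i}} ⋯ c_{m−1}^{a_{i_{m−1},i}} · c_m. Then for every nonzero complex c such that for each 1 ≤ j ≤ N the quantity D_j := Σ_{1≤m≤j, i_m=i} c·C_m + Σ_{j<m≤N, i_m=i} C_m is nonzero, one has the identity x_i( (c−1)·φ_i(g) ) · g · x_i( (c^{−1}−1)·ε_i(g) ) = t·𝐲_{i_1}(c'_1)⋯𝐲_{i_N}(c'_N), where c'_j = c_j · ( Σ_{1≤m<j, i_m=i} c·C_m + Σ_{j≤m≤N, i_m=i} C_m ) / D_j. -/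
/-!
Write `𝐲_j(e) = diag(…, e⁻¹, e, …) + E_{j+1,j}`. Moving `x_i(A)` to the right past one factor
gives `x_i(A) 𝐲_j(e) = 𝐲_j(e') x_i(A')`, with `e' = e`, `A' = A e^{a_{j,i}}` for `j ≠ i` and
`e' = e / (1 + A e)`, `A' = A e² / (1 + A e)` for `j = i`. Starting from `A = (c - 1) / S`,
`S = Σ_{i_m = i} C_m`, the parameter after `m` factors is `(c - 1) W_m / D_m`, where
`W_m = ∏_{k < m} c_k^{a_{i_k,i}}` and `D_m = S + (c - 1) Σ_{k < m, i_k = i} C_k`; so the factors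
become the `𝐲_{i_m}(c'_m)` and `x_i((c - 1) W_N / (c S))` is left over at the right end.

In the lower triangular `g`, rows and columns `i, i + 1` give
`g_{i+1,i+1} = (t_{i+1} / t_i) W_N g_{i,i}` and `g_{i+1,i} = (t_{i+1} / t_i) S g_{i,i}`. Hence
moving `x_i((c - 1) φ_i(g))` past `t` produces exactly `x_i((c - 1) / S)`, and the leftover factor
`x_i((1 - c⁻¹) ε_i(g))` cancels against `x_i((c⁻¹ - 1) ε_i(g))`.
-/

open Matrix

/-- The type `A_n` Cartan matrix (1-based indices): `a_{ii} = 2`, `a_{ij} = −1` if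
`|i−j| = 1`, and `a_{ij} = 0` otherwise. -/
def cartanA (i j : ℕ) : ℤ := if i = j then 2 else if i + 1 = j ∨ j + 1 = i then -1 else 0

namespace Matrix

variable {m R : Type*} [Fintype m] [DecidableEq m] [NonUnitalNonAssocSemiring R]

theorem single_mul_diagonal (u v : m) (x : R) (d : m → R) :
    single u v x * diagonal d = single u v (x * d v) := by
  ext a b
  by_cases h : u = a ∧ v = b
  · obtain ⟨rfl, rfl⟩ := h; simp
  · rw [mul_diagonal, single_apply_of_ne _ _ _ _ _ h, single_apply_of_ne _ _ _ _ _ h, zero_mul]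

theorem diagonal_mul_single (u v : m) (x : R) (d : m → R) :
    diagonal d * single u v x = single u v (d u * x) := by
  ext a b
  by_cases h : u = a ∧ v = b
  · obtain ⟨rfl, rfl⟩ := h; simp
  · rw [diagonal_mul, single_apply_of_ne _ _ _ _ _ h, single_apply_of_ne _ _ _ _ _ h, mul_zero]

end Matrix

@[to_additive]
theorem Fin.prod_filter_val_lt_succ {M : Type*} [CommMonoid M] {N k : ℕ} (hk : k < N)
    (f : Fin N → M) :
    ∏ m ∈ Finset.univ.filter (fun m : Fin N => (m:ℕ) < k + 1), f m
      = (∏ m ∈ Finset.univ.filter (fun m : Fin N => (m:ℕ) < k), f m) * f ⟨k, hk⟩ := by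
  rw [show Finset.univ.filter (fun m : Fin N => (m:ℕ) < k + 1)
      = Finset.cons ⟨k, hk⟩ (Finset.univ.filter (fun m : Fin N => (m:ℕ) < k)) (by simp) by
    ext m; simp [Fin.ext_iff]; omega, Finset.prod_cons, mul_comm]

theorem cartanA_self (a : ℕ) : cartanA a a = 2 := if_pos rfl

section

variable {n : ℕ}

theorem Em_succ_succ (u v : Fin (n+1)) : Em n ((u:ℕ)+1) ((v:ℕ)+1) = single u v 1 := by
  ext a b
  simp only [Em, of_apply, single_apply, Fin.ext_iff, Nat.add_right_cancel_iff, eq_comm]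

theorem xm_eq_one_add_single (i : Fin n) (A : ℂ) :
    xm n ((i:ℕ)+1) A = 1 + single i.castSucc i.succ A := by
  have h := Em_succ_succ i.castSucc i.succ
  rw [Fin.val_castSucc, Fin.val_succ] at h
  rw [xm, h, smul_single, smul_eq_mul, mul_one]

noncomputable def yDiag (j : Fin n) (e : ℂ) : Fin (n+1) → ℂ :=
  fun r => if r = j.castSucc then e⁻¹ else if r = j.succ then e else 1

@[simp]
theorem yDiag_castSucc_self (j : Fin n) (e : ℂ) : yDiag j e j.castSucc = e⁻¹ := by
  simp [yDiag]

@[simp]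
theorem yDiag_succ_self (j : Fin n) (e : ℂ) : yDiag j e j.succ = e := by
  simp [yDiag, Fin.castSucc_lt_succ.ne']

theorem yDiag_ne_zero (j : Fin n) {e : ℂ} (he : e ≠ 0) (r : Fin (n+1)) : yDiag j e r ≠ 0 := by
  unfold yDiag; split_ifs <;> simp [he]

theorem yDiag_succ (i j : Fin n) {e : ℂ} (he : e ≠ 0) :
    yDiag j e i.succ = yDiag j e i.castSucc * e ^ cartanA ((j:ℕ)+1) ((i:ℕ)+1) := by
  simp only [yDiag, cartanA, Fin.ext_iff, Fin.val_castSucc, Fin.val_succ]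
  split_ifs <;> first | omega | simp [zpow_ofNat, he, sq]

theorem Yb_eq_diagonal_add_single (j : Fin n) {e : ℂ} (he : e ≠ 0) :
    Yb n ((j:ℕ)+1) e = diagonal (yDiag j e) + single j.succ j.castSucc 1 := by
  have hEm := Em_succ_succ j.succ j.castSucc
  rw [Fin.val_castSucc, Fin.val_succ] at hEm
  have halco : alco n ((j:ℕ)+1) e⁻¹ = diagonal (yDiag j e) := by
    rw [alco, inv_inv]
    congr 1
    funext r
    simp only [yDiag, Fin.ext_iff, Fin.val_castSucc, Fin.val_succ, Nat.add_right_cancel_iff]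
  rw [Yb, ym, hEm, halco, add_mul, one_mul, smul_mul_assoc, single_mul_diagonal, smul_single]
  simp [he]

theorem isLowerTriangular_Yb (j : Fin n) {e : ℂ} (he : e ≠ 0) :
    (Yb n ((j:ℕ)+1) e).IsLowerTriangular := by
  rw [Yb_eq_diagonal_add_single j he]
  exact (blockTriangular_diagonal _).add
    (blockTriangular_single' (b := id) Fin.castSucc_lt_succ.le 1)

theorem mul_Yb_apply (L : Matrix (Fin (n+1)) (Fin (n+1)) ℂ) (j : Fin n) {e : ℂ} (he : e ≠ 0)
    (x y : Fin (n+1)) :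
    (L * Yb n ((j:ℕ)+1) e) x y
      = L x y * yDiag j e y + if y = j.castSucc then L x j.succ else 0 := by
  rw [Yb_eq_diagonal_add_single j he, mul_add, Matrix.add_apply, mul_diagonal]
  split_ifs with h
  · subst h; rw [mul_single_apply_same, mul_one]
  · rw [mul_single_apply_of_ne _ _ _ _ _ h]

theorem mul_Yb_apply_self {L : Matrix (Fin (n+1)) (Fin (n+1)) ℂ} (hL : L.IsLowerTriangular)
    (j : Fin n) {e : ℂ} (he : e ≠ 0) (x : Fin (n+1)) :
    (L * Yb n ((j:ℕ)+1) e) x x = L x x * yDiag j e x := by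
  rw [mul_Yb_apply L j he, add_eq_left]
  split_ifs with h
  · exact hL (h ▸ Fin.castSucc_lt_succ)
  · rfl

theorem xm_zero (i : Fin n) : xm n ((i:ℕ)+1) 0 = 1 := by
  simp [xm]

theorem xm_mul_xm (i : Fin n) (A B : ℂ) :
    xm n ((i:ℕ)+1) A * xm n ((i:ℕ)+1) B = xm n ((i:ℕ)+1) (A + B) := by
  rw [xm_eq_one_add_single, xm_eq_one_add_single, xm_eq_one_add_single, add_mul, one_mul,
    mul_add, mul_one, single_mul_single_of_ne _ _ _ _ Fin.castSucc_lt_succ.ne', single_add]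
  abel

theorem xm_mul_diagonal (i : Fin n) (A : ℂ) {d : Fin (n+1) → ℂ} (hd : d i.castSucc ≠ 0) :
    xm n ((i:ℕ)+1) A * diagonal d
      = diagonal d * xm n ((i:ℕ)+1) (A * d i.succ / d i.castSucc) := by
  rw [xm_eq_one_add_single, xm_eq_one_add_single, add_mul, mul_add, one_mul, mul_one,
    single_mul_diagonal, diagonal_mul_single]
  congr 2
  field_simp

theorem xm_mul_Yb_of_ne {i j : Fin n} (hij : j ≠ i) (A : ℂ) {e : ℂ} (he : e ≠ 0) :
    xm n ((i:ℕ)+1) A * Yb n ((j:ℕ)+1) e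
      = Yb n ((j:ℕ)+1) e * xm n ((i:ℕ)+1) (A * e ^ cartanA ((j:ℕ)+1) ((i:ℕ)+1)) := by
  have h₁ : i.succ ≠ j.succ := fun h => hij (Fin.succ_inj.1 h).symm
  have h₂ : j.castSucc ≠ i.castSucc := fun h => hij (Fin.castSucc_inj.1 h)
  rw [xm_eq_one_add_single, xm_eq_one_add_single, Yb_eq_diagonal_add_single j he]
  simp only [add_mul, mul_add, one_mul, mul_one, single_mul_diagonal, diagonal_mul_single,
    single_mul_single_of_ne _ _ _ _ h₁, single_mul_single_of_ne _ _ _ _ h₂, add_zero,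
    yDiag_succ i j he]
  rw [mul_left_comm]
  abel

theorem xm_mul_Yb_self (i : Fin n) (A : ℂ) {e : ℂ} (he : e ≠ 0) (hAe : 1 + A * e ≠ 0) :
    xm n ((i:ℕ)+1) A * Yb n ((i:ℕ)+1) e
      = Yb n ((i:ℕ)+1) (e / (1 + A * e)) * xm n ((i:ℕ)+1) (A * e ^ 2 / (1 + A * e)) := by
  rw [xm_eq_one_add_single, xm_eq_one_add_single, Yb_eq_diagonal_add_single i he,
    Yb_eq_diagonal_add_single i (div_ne_zero he hAe)]
  simp only [add_mul, mul_add, one_mul, mul_one, single_mul_diagonal, diagonal_mul_single,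
    single_mul_single_same]
  have hoff : A * yDiag i e i.succ
      = yDiag i (e / (1 + A * e)) i.castSucc * (A * e ^ 2 / (1 + A * e)) := by
    rw [yDiag_succ_self, yDiag_castSucc_self, inv_div]
    field_simp
  have hdiag : diagonal (yDiag i e) + single i.castSucc i.castSucc A
      = diagonal (yDiag i (e / (1 + A * e)))
        + single i.succ i.succ (A * e ^ 2 / (1 + A * e)) := by
    rw [← diagonal_single, ← diagonal_single, diagonal_add, diagonal_add]
    congr 1
    funext r
    by_cases h₁ : r = i.castSucc
    · subst h₁
      simp only [yDiag_castSucc_self, Pi.single_eq_same, inv_div,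
        Pi.single_eq_of_ne Fin.castSucc_lt_succ.ne, add_zero]
      field_simp
    · by_cases h₂ : r = i.succ
      · subst h₂
        simp only [yDiag_succ_self, Pi.single_eq_same,
          Pi.single_eq_of_ne Fin.castSucc_lt_succ.ne', add_zero]
        rw [← add_div, eq_div_iff hAe]
        ring
      · simp [yDiag, h₁, h₂]
  rw [hoff]
  linear_combination (norm := abel) hdiag

/-- With the parameter of `x_i` normalized as `β W / (α + β T)`, both commutation relations
become the single recursion `W ↦ W e^{a_{j,i}}`, `T ↦ T + [j = i] W e`. -/
theorem xm_mul_Yb (i j : Fin n) {e : ℂ} (he : e ≠ 0) {α β W T T' : ℂ}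
    (hT' : T' = T + if j = i then W * e else 0) (hu : α + β * T ≠ 0) (hu' : α + β * T' ≠ 0) :
    xm n ((i:ℕ)+1) (β * W / (α + β * T)) * Yb n ((j:ℕ)+1) e
      = Yb n ((j:ℕ)+1) (e * ((α + β * T) / (α + β * T')))
        * xm n ((i:ℕ)+1) (β * (W * e ^ cartanA ((j:ℕ)+1) ((i:ℕ)+1)) / (α + β * T')) := by
  subst hT'
  by_cases hji : j = i
  · subst hji
    rw [if_pos rfl] at hu' ⊢
    have hAe : 1 + β * W / (α + β * T) * e = (α + β * (T + W * e)) / (α + β * T) := by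
      field_simp; ring
    rw [xm_mul_Yb_self j _ he (hAe ▸ div_ne_zero hu' hu), hAe, cartanA_self]
    congr 2 <;> field_simp
  · rw [if_neg hji, add_zero, div_self hu, mul_one, xm_mul_Yb_of_ne hji _ he]
    ring_nf

section Prefix

variable {N : ℕ} (w : Fin N → Fin n) (c : Fin N → ℂ) (i : Fin n)

noncomputable def prefixWeight (k : ℕ) : ℂ :=
  ∏ m ∈ Finset.univ.filter (fun m : Fin N => (m:ℕ) < k), c m ^ cartanA ((w m:ℕ)+1) ((i:ℕ)+1)

/-- `prefixWeight w c i m * c m` is the paper's `C_m`. -/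
noncomputable def prefixSum (k : ℕ) : ℂ :=
  ∑ m ∈ Finset.univ.filter (fun m : Fin N => (m:ℕ) < k),
    if w m = i then prefixWeight w c i m * c m else 0

noncomputable def yPrefix (k : ℕ) : Matrix (Fin (n+1)) (Fin (n+1)) ℂ :=
  ((List.ofFn fun m => Yb n ((w m:ℕ)+1) (c m)).take k).prod

variable {w c i}

theorem prefixWeight_eq_prod_Iio (m : Fin N) :
    prefixWeight w c i m = ∏ k ∈ Finset.Iio m, c k ^ cartanA ((w k:ℕ)+1) ((i:ℕ)+1) := by
  rw [prefixWeight, ← Finset.filter_gt_eq_Iio]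
  simp only [Fin.lt_def]

@[simp]
theorem prefixWeight_zero : prefixWeight w c i 0 = 1 := by simp [prefixWeight]

theorem prefixWeight_succ {k : ℕ} (hk : k < N) :
    prefixWeight w c i (k+1)
      = prefixWeight w c i k * c ⟨k, hk⟩ ^ cartanA ((w ⟨k, hk⟩:ℕ)+1) ((i:ℕ)+1) :=
  Fin.prod_filter_val_lt_succ hk _

@[simp]
theorem prefixSum_zero : prefixSum w c i 0 = 0 := by simp [prefixSum]

theorem prefixSum_succ {k : ℕ} (hk : k < N) :
    prefixSum w c i (k+1) = prefixSum w c i k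
      + if w ⟨k, hk⟩ = i then prefixWeight w c i k * c ⟨k, hk⟩ else 0 :=
  Fin.sum_filter_val_lt_succ hk _

theorem sum_filter_val_lt_add_sum_filter_val_ge (a : ℂ) (k : ℕ) :
    ∑ m ∈ Finset.univ.filter (fun m : Fin N => (m:ℕ) < k ∧ w m = i),
        a * (prefixWeight w c i m * c m)
      + ∑ m ∈ Finset.univ.filter (fun m : Fin N => k ≤ (m:ℕ) ∧ w m = i),
        prefixWeight w c i m * c m
      = prefixSum w c i N + (a - 1) * prefixSum w c i k := by
  simp only [prefixSum, Finset.sum_filter, Finset.mul_sum, ← Finset.sum_add_distrib]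
  refine Finset.sum_congr rfl fun m _ => ?_
  have := m.isLt
  split_ifs <;> first | omega | ring

theorem sum_filter_lt_add_sum_filter_ge (a : ℂ) (j : Fin N) :
    ∑ m ∈ Finset.univ.filter (fun m : Fin N => m < j ∧ w m = i), a * (prefixWeight w c i m * c m)
      + ∑ m ∈ Finset.univ.filter (fun m : Fin N => j ≤ m ∧ w m = i), prefixWeight w c i m * c m
      = prefixSum w c i N + (a - 1) * prefixSum w c i j := by
  rw [← sum_filter_val_lt_add_sum_filter_val_ge]
  simp only [Fin.lt_def, Fin.le_def]

theorem sum_filter_le_add_sum_filter_gt (a : ℂ) (j : Fin N) :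
    ∑ m ∈ Finset.univ.filter (fun m : Fin N => m ≤ j ∧ w m = i), a * (prefixWeight w c i m * c m)
      + ∑ m ∈ Finset.univ.filter (fun m : Fin N => j < m ∧ w m = i), prefixWeight w c i m * c m
      = prefixSum w c i N + (a - 1) * prefixSum w c i (j + 1) := by
  rw [← sum_filter_val_lt_add_sum_filter_val_ge]
  simp only [Fin.le_def, Fin.lt_def, Nat.lt_add_one_iff, Nat.add_one_le_iff]

@[simp]
theorem yPrefix_zero : yPrefix w c 0 = 1 := by simp [yPrefix]

theorem yPrefix_succ {k : ℕ} (hk : k < N) :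
    yPrefix w c (k+1) = yPrefix w c k * Yb n ((w ⟨k, hk⟩:ℕ)+1) (c ⟨k, hk⟩) := by
  rw [yPrefix, List.prod_take_succ _ _ (by simpa using hk), List.getElem_ofFn, yPrefix]

theorem yPrefix_eq_prod :
    yPrefix w c N = (List.ofFn fun m => Yb n ((w m:ℕ)+1) (c m)).prod := by
  rw [yPrefix, List.take_of_length_le (by simp)]

theorem isLowerTriangular_yPrefix (hc : ∀ m, c m ≠ 0) {k : ℕ} (hk : k ≤ N) :
    (yPrefix w c k).IsLowerTriangular := by
  induction k with
  | zero => exact yPrefix_zero (w := w) (c := c) ▸ blockTriangular_one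
  | succ k ih =>
    rw [yPrefix_succ hk]
    exact (ih (by omega)).mul (isLowerTriangular_Yb _ (hc _))

theorem yPrefix_entries (hc : ∀ m, c m ≠ 0) {k : ℕ} (hk : k ≤ N) :
    yPrefix w c k i.castSucc i.castSucc ≠ 0
      ∧ yPrefix w c k i.succ i.succ
          = yPrefix w c k i.castSucc i.castSucc * prefixWeight w c i k
      ∧ yPrefix w c k i.succ i.castSucc
          = yPrefix w c k i.castSucc i.castSucc * prefixSum w c i k := by
  induction k with
  | zero => simp [one_apply, Fin.castSucc_lt_succ.ne']
  | succ k ih =>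
    obtain ⟨hp, hW, hT⟩ := ih (by omega)
    have hL := isLowerTriangular_yPrefix (w := w) hc (k := k) (by omega)
    set j := w ⟨k, hk⟩
    set e := c ⟨k, hk⟩
    have he : e ≠ 0 := hc _
    rw [yPrefix_succ hk, mul_Yb_apply_self hL j he, mul_Yb_apply_self hL j he,
      mul_Yb_apply _ j he, prefixWeight_succ hk, prefixSum_succ hk]
    refine ⟨mul_ne_zero hp (yDiag_ne_zero j he _), ?_, ?_⟩
    · rw [hW, yDiag_succ i j he]; ring
    · by_cases hji : j = i
      · rw [if_pos (congrArg Fin.castSucc hji.symm), if_pos hji, hji, hT, hW,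
          yDiag_castSucc_self]
        field_simp
        ring
      · rw [if_neg (fun h => hji (Fin.castSucc_inj.1 h).symm), if_neg hji, hT]
        ring

theorem xm_mul_yPrefix (hc : ∀ m, c m ≠ 0) (α β : ℂ)
    (hu : ∀ k ≤ N, α + β * prefixSum w c i k ≠ 0) {k : ℕ} (hk : k ≤ N) :
    xm n ((i:ℕ)+1) (β / α) * yPrefix w c k
      = yPrefix w (fun m => c m * ((α + β * prefixSum w c i m)
            / (α + β * prefixSum w c i (m+1)))) k
        * xm n ((i:ℕ)+1) (β * prefixWeight w c i k / (α + β * prefixSum w c i k)) := by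
  induction k with
  | zero => simp
  | succ k ih =>
    rw [yPrefix_succ hk, yPrefix_succ hk, ← mul_assoc, ih (by omega), mul_assoc, mul_assoc,
      xm_mul_Yb i _ (hc _) (prefixSum_succ hk) (hu k (by omega)) (hu (k+1) hk),
      prefixWeight_succ hk]

theorem xm_mul_mul_xm_eq (hc : ∀ m, c m ≠ 0) {td : Fin (n+1) → ℂ} (htd : ∀ a, td a ≠ 0)
    {g : Matrix (Fin (n+1)) (Fin (n+1)) ℂ}
    (hg : g = diagonal td * (List.ofFn fun m => Yb n ((w m:ℕ)+1) (c m)).prod)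
    (h21 : g i.succ i.castSucc ≠ 0) {a : ℂ} (ha : a ≠ 0)
    (hD : ∀ k : Fin N, prefixSum w c i N + (a - 1) * prefixSum w c i (k + 1) ≠ 0) :
    xm n ((i:ℕ)+1) ((a - 1) * (g i.castSucc i.castSucc / g i.succ i.castSucc)) * g
        * xm n ((i:ℕ)+1) ((a⁻¹ - 1) * (g i.succ i.succ / g i.succ i.castSucc))
      = diagonal td * (List.ofFn fun m => Yb n ((w m:ℕ)+1)
          (c m * ((prefixSum w c i N + (a - 1) * prefixSum w c i m)
            / (prefixSum w c i N + (a - 1) * prefixSum w c i (m + 1))))).prod := by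
  obtain ⟨hp, hW, hT⟩ := yPrefix_entries (w := w) (i := i) hc le_rfl
  rw [yPrefix_eq_prod] at hp hW hT
  set L := (List.ofFn fun m => Yb n ((w m:ℕ)+1) (c m)).prod
  set S := prefixSum w c i N
  have hg_apply (x y : Fin (n+1)) : g x y = td x * L x y := by rw [hg, diagonal_mul]
  have hS : S ≠ 0 := fun h => h21 (by rw [hg_apply, hT, h, mul_zero, mul_zero])
  have hu : ∀ k ≤ N, S + (a - 1) * prefixSum w c i k ≠ 0
    | 0, _ => by simpa using hS
    | k + 1, hk => hD ⟨k, hk⟩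
  have hpush := xm_mul_yPrefix hc S (a - 1) hu le_rfl
  rw [yPrefix_eq_prod, yPrefix_eq_prod] at hpush
  have hti := htd i.castSucc
  have hti' := htd i.succ
  have hφ : (a - 1) * (td i.castSucc * L i.castSucc i.castSucc
      / (td i.succ * (L i.castSucc i.castSucc * S))) * td i.succ / td i.castSucc
      = (a - 1) / S := by
    field_simp
  have hε : (a - 1) * prefixWeight w c i N / (S + (a - 1) * S)
      + (a⁻¹ - 1) * (td i.succ * (L i.castSucc i.castSucc * prefixWeight w c i N)
        / (td i.succ * (L i.castSucc i.castSucc * S))) = 0 := by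
    rw [show S + (a - 1) * S = a * S by ring]
    field_simp
    ring
  rw [hg_apply, hg_apply, hg_apply, hW, hT, hg, ← mul_assoc, xm_mul_diagonal _ _ (htd _), hφ,
    mul_assoc (diagonal td), hpush, mul_assoc, mul_assoc, xm_mul_xm, hε, xm_zero, mul_one]

end Prefix

end

theorem stmt12_general (n N : ℕ) (ik : Fin N → ℕ)
    (hik : ∀ k, 1 ≤ ik k ∧ ik k ≤ n) (c : Fin N → ℂ) (hc : ∀ k, c k ≠ 0)
    (td : Fin (n+1) → ℂ) (hdet : (Matrix.diagonal td).det = 1)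
    (g : Matrix (Fin (n+1)) (Fin (n+1)) ℂ)
    (hg : g = Matrix.diagonal td * (List.ofFn fun k => Yb n (ik k) (c k)).prod)
    (i : Fin n) (h21 : g i.succ i.castSucc ≠ 0)
    (C : Fin N → ℂ)
    (hC : ∀ m, C m = (∏ k ∈ Finset.Iio m, c k ^ cartanA (ik k) ((i : ℕ) + 1)) * c m)
    (cpar : ℂ) (hcpar : cpar ≠ 0)
    (hD : ∀ j : Fin N,
      (∑ m ∈ Finset.univ.filter (fun m : Fin N => m ≤ j ∧ ik m = (i : ℕ) + 1), cpar * C m)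
        + (∑ m ∈ Finset.univ.filter (fun m : Fin N => j < m ∧ ik m = (i : ℕ) + 1), C m)
        ≠ 0) :
    xm n ((i : ℕ) + 1) ((cpar - 1) * (g i.castSucc i.castSucc / g i.succ i.castSucc)) * g *
        xm n ((i : ℕ) + 1) ((cpar⁻¹ - 1) * (g i.succ i.succ / g i.succ i.castSucc))
      = Matrix.diagonal td *
        (List.ofFn fun j => Yb n (ik j)
          (c j *
            (((∑ m ∈ Finset.univ.filter (fun m : Fin N => m < j ∧ ik m = (i : ℕ) + 1),
                  cpar * C m)
              + ∑ m ∈ Finset.univ.filter (fun m : Fin N => j ≤ m ∧ ik m = (i : ℕ) + 1), C m)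
            / ((∑ m ∈ Finset.univ.filter (fun m : Fin N => m ≤ j ∧ ik m = (i : ℕ) + 1),
                  cpar * C m)
              + ∑ m ∈ Finset.univ.filter (fun m : Fin N => j < m ∧ ik m = (i : ℕ) + 1),
                  C m)))).prod := by
  obtain ⟨w, rfl⟩ : ∃ w : Fin N → Fin n, ik = fun m => (w m : ℕ) + 1 :=
    ⟨fun m => ⟨ik m - 1, by have := hik m; omega⟩,
      funext fun m => by have := hik m; simp only; omega⟩
  obtain rfl : C = fun m : Fin N => prefixWeight w c i m * c m :=
    funext fun m => by rw [hC, prefixWeight_eq_prod_Iio]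
  simp only [Nat.add_right_cancel_iff, ← Fin.ext_iff] at hD hg ⊢
  have htd : ∀ a, td a ≠ 0 := fun a =>
    Finset.prod_ne_zero_iff.1 (by rw [← det_diagonal, hdet]; exact one_ne_zero) a
      (Finset.mem_univ a)
  simp only [sum_filter_lt_add_sum_filter_ge, sum_filter_le_add_sum_filter_gt] at hD ⊢
  exact xm_mul_mul_xm_eq hc htd hg h21 hcpar hD

/-- The explicit form of the geometric crystal action `e_i^c` on `t·Θ⁻_𝐢(c)`:
`x_i((c−1)φ_i(g)) · g · x_i((c⁻¹−1)ε_i(g)) = t·𝐲_{i_1}(c'_1)⋯𝐲_{i_N}(c'_N)`, where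
`c'_j = c_j·(Σ_{m<j, i_m=i} c·C_m + Σ_{m≥j, i_m=i} C_m)/(Σ_{m≤j, i_m=i} c·C_m + Σ_{m>j, i_m=i} C_m)`
and `C_m = c_1^{a_{i_1,i}}⋯c_{m−1}^{a_{i_{m−1},i}}·c_m`. -/
theorem stmt12 (n N : ℕ) (hn : 1 ≤ n) (ik : Fin N → ℕ)
    (hik : ∀ k, 1 ≤ ik k ∧ ik k ≤ n) (c : Fin N → ℂ) (hc : ∀ k, c k ≠ 0)
    (td : Fin (n+1) → ℂ) (hdet : (Matrix.diagonal td).det = 1)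
    (g : Matrix (Fin (n+1)) (Fin (n+1)) ℂ)
    (hg : g = Matrix.diagonal td * (List.ofFn fun k => Yb n (ik k) (c k)).prod)
    (i : Fin n) (h21 : g i.succ i.castSucc ≠ 0)
    (C : Fin N → ℂ)
    (hC : ∀ m, C m = (∏ k ∈ Finset.Iio m, c k ^ cartanA (ik k) ((i : ℕ) + 1)) * c m)
    (cpar : ℂ) (hcpar : cpar ≠ 0)
    (hD : ∀ j : Fin N,
      (∑ m ∈ Finset.univ.filter (fun m : Fin N => m ≤ j ∧ ik m = (i : ℕ) + 1), cpar * C m)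
        + (∑ m ∈ Finset.univ.filter (fun m : Fin N => j < m ∧ ik m = (i : ℕ) + 1), C m)
        ≠ 0) :
    xm n ((i : ℕ) + 1) ((cpar - 1) * (g i.castSucc i.castSucc / g i.succ i.castSucc)) * g *
        xm n ((i : ℕ) + 1) ((cpar⁻¹ - 1) * (g i.succ i.succ / g i.succ i.castSucc))
      = Matrix.diagonal td *
        (List.ofFn fun j => Yb n (ik j)
          (c j *
            (((∑ m ∈ Finset.univ.filter (fun m : Fin N => m < j ∧ ik m = (i : ℕ) + 1),
                  cpar * C m)
              + ∑ m ∈ Finset.univ.filter (fun m : Fin N => j ≤ m ∧ ik m = (i : ℕ) + 1), C m)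
            / ((∑ m ∈ Finset.univ.filter (fun m : Fin N => m ≤ j ∧ ik m = (i : ℕ) + 1),
                  cpar * C m)
              + ∑ m ∈ Finset.univ.filter (fun m : Fin N => j < m ∧ ik m = (i : ℕ) + 1),
                  C m)))).prod :=
  stmt12_general n N ik hik c hc td hdet g hg i h21 C hC cpar hcpar hD
end

section
/- Let A = (a_{ij})_{i,j ∈ I} be the Cartan matrix of a semisimple Lie algebra, (i_1, …, i_N) a sequence in I, i ∈ I an index occurring in the sequence, and x = (x_1, …, x_N) ∈ ℤ^N. Set X_m := Σ_{k=1}^{m} a_{i_k,i} x_k, let 𝒳 := min{ X_m : 1 ≤ m ≤ N, i_m = i }, and put m_e := max{ l : i_l = i, X_l = 𝒳 } and m_f := min{ l : i_l = i, X_l = 𝒳 }. For an integer ν define ẽ^ν(x) coordinatewise by (ẽ^ν x)_j = x_j + min( min_{1≤m<j, i_m=i}(ν + X_m), min_{j≤m≤N, i_m=i}(X_m) ) − min( min_{1≤m≤j, i_m=i}(ν + X_m), min_{j<m≤N, i_m=i}(X_m) ), where an empty minimum is +∞. Then ẽ^1(x) = x − δ_{m_e} and ẽ^{−1}(x) = x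 + δ_{m_f}, where δ_l ∈ ℤ^N is the l-th standard basis vector; i.e. the ultra-discretized crystal operator ẽ_i decreases exactly the coordinate x_{m_e} by 1, and f̃_i = ẽ_i^{−1} increases exactly the coordinate x_{m_f} by 1. -/
/-!
Only the positions where the minimum `𝒳` of the `X_m` is attained matter. Raising some of the
`X_m` by `1` leaves the minimum unchanged iff a minimiser is among the others, and raises it by
`1` otherwise; lowering some of them by `1` lowers the minimum iff a minimiser is among them.
So the two minima in `(ẽ^ν x)_j`, which shift the `X_m` with `m < j` and with `m ≤ j`, differ
exactly when `j` is the last minimiser `m_e` (`ν = 1`) or the first one `m_f` (`ν = -1`).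
-/

section IsGreatestIsLeast

variable {α : Type*} [Preorder α] {s : Set α} {a b : α}

theorem IsGreatest.exists_ge_iff (h : IsGreatest s a) : (∃ x ∈ s, b ≤ x) ↔ b ≤ a :=
  ⟨fun ⟨_, hx, hbx⟩ => hbx.trans (h.2 hx), fun hba => ⟨a, h.1, hba⟩⟩

theorem IsGreatest.exists_gt_iff (h : IsGreatest s a) : (∃ x ∈ s, b < x) ↔ b < a :=
  ⟨fun ⟨_, hx, hbx⟩ => hbx.trans_le (h.2 hx), fun hba => ⟨a, h.1, hba⟩⟩

theorem IsLeast.exists_le_iff (h : IsLeast s a) : (∃ x ∈ s, x ≤ b) ↔ a ≤ b :=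
  ⟨fun ⟨_, hx, hxb⟩ => (h.2 hx).trans hxb, fun hab => ⟨a, h.1, hab⟩⟩

theorem IsLeast.exists_lt_iff (h : IsLeast s a) : (∃ x ∈ s, x < b) ↔ a < b :=
  ⟨fun ⟨_, hx, hxb⟩ => (h.2 hx).trans_lt hxb, fun hab => ⟨a, h.1, hab⟩⟩

end IsGreatestIsLeast

namespace Finset

theorem add_inf' {ι G : Type*} [AddGroup G] [LinearOrder G] [AddLeftMono G] (s : Finset ι)
    (f : ι → G) (a : G) (hs : s.Nonempty) : a + s.inf' hs f = s.inf' hs fun i => a + f i :=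
  map_finset_inf' (OrderIso.addLeft a) hs f

variable {α : Type*} (S : Finset α) (hS : S.Nonempty) (X : α → ℤ) (P : α → Prop) [DecidablePred P]

open scoped Classical in
theorem inf'_ite_one_add :
    S.inf' hS (fun m => if P m then 1 + X m else X m)
      = S.inf' hS X + if ∃ m ∈ {m | m ∈ S ∧ X m = S.inf' hS X}, ¬ P m then 0 else 1 := by
  set c := S.inf' hS X
  have hc : ∀ m ∈ S, c ≤ X m := fun m hm => inf'_le X hm
  split_ifs with hout
  · obtain ⟨m, ⟨hm, hXm⟩, hPm⟩ := hout
    refine le_antisymm ((inf'_le _ hm).trans_eq ?_) (le_inf' _ _ fun b hb => ?_)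
    · simp [hPm, hXm]
    · split_ifs <;> linarith [hc b hb]
  · push Not at hout
    obtain ⟨m₀, hm₀, hXm₀⟩ : ∃ m ∈ S, X m = c :=
      (exists_mem_eq_inf' hS X).imp fun _ => And.imp_right Eq.symm
    refine le_antisymm ((inf'_le _ hm₀).trans_eq ?_) (le_inf' _ _ fun b hb => ?_)
    · rw [if_pos (hout m₀ ⟨hm₀, hXm₀⟩), hXm₀, add_comm]
    · split_ifs with hPb
      · linarith [hc b hb]
      · have hXb : X b ≠ c := fun hXb => hPb (hout b ⟨hb, hXb⟩)
        have := hc b hb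
        omega

open scoped Classical in
theorem inf'_ite_neg_one_add :
    S.inf' hS (fun m => if P m then -1 + X m else X m)
      = S.inf' hS X - if ∃ m ∈ {m | m ∈ S ∧ X m = S.inf' hS X}, P m then 1 else 0 := by
  have hshift : (fun m => if P m then -1 + X m else X m)
      = fun m => -1 + if ¬ P m then 1 + X m else X m := by
    ext m
    split_ifs <;> ring
  rw [hshift, ← add_inf', inf'_ite_one_add]
  simp only [not_not]
  split_ifs <;> ring

end Finset

theorem stmt13_general {I : Type*} [DecidableEq I]
    (N : ℕ) (ik : Fin N → I) (i : I)
    (hSne : (Finset.univ.filter fun m : Fin N => ik m = i).Nonempty)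
    (x : Fin N → ℤ)
    (X : Fin N → ℤ)
    (chi : ℤ)
    (hchi : chi = Finset.inf' (Finset.univ.filter fun m : Fin N => ik m = i) hSne X)
    (me mf : Fin N)
    (hme : ik me = i ∧ X me = chi ∧ ∀ l, ik l = i → X l = chi → l ≤ me)
    (hmf : ik mf = i ∧ X mf = chi ∧ ∀ l, ik l = i → X l = chi → mf ≤ l) :
    ∀ j : Fin N,
      (x j
          + Finset.inf' (Finset.univ.filter fun m : Fin N => ik m = i) hSne
              (fun m => if m < j then 1 + X m else X m)
          - Finset.inf' (Finset.univ.filter fun m : Fin N => ik m = i) hSne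
              (fun m => if m ≤ j then 1 + X m else X m)
        = x j - (if j = me then 1 else 0)) ∧
      (x j
          + Finset.inf' (Finset.univ.filter fun m : Fin N => ik m = i) hSne
              (fun m => if m < j then (-1) + X m else X m)
          - Finset.inf' (Finset.univ.filter fun m : Fin N => ik m = i) hSne
              (fun m => if m ≤ j then (-1) + X m else X m)
        = x j + (if j = mf then 1 else 0)) := by
  have hlast : IsGreatest {m | ik m = i ∧ X m = chi} me :=
    ⟨⟨hme.1, hme.2.1⟩, fun l ⟨hl, hXl⟩ => hme.2.2 l hl hXl⟩
  have hfirst : IsLeast {m | ik m = i ∧ X m = chi} mf :=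
    ⟨⟨hmf.1, hmf.2.1⟩, fun l ⟨hl, hXl⟩ => hmf.2.2 l hl hXl⟩
  intro j
  simp only [Finset.inf'_ite_one_add, Finset.inf'_ite_neg_one_add, ← hchi,
    Finset.mem_filter_univ, not_lt, not_le, hlast.exists_ge_iff, hlast.exists_gt_iff, hfirst.exists_le_iff, hfirst.exists_lt_iff]
  constructor <;> split_ifs <;> omega

/-- Lemma 3.10: the ultra-discretized crystal operator `ẽ_i` (the case `ν = 1` of the
ultra-discretization `ẽ^ν` of the geometric crystal action `e_i^c`) decreases exactly the
coordinate `x_{m_e}` by 1, and `f̃_i = ẽ_i^{−1}` (the case `ν = −1`) increases exactly the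
coordinate `x_{m_f}` by 1.  Here `X_m = Σ_{k≤m} a_{i_k,i} x_k`, `𝒳 = min{X_m : i_m = i}`,
`m_e` is the largest and `m_f` the smallest index `l` with `i_l = i` and `X_l = 𝒳`, and
`(ẽ^ν x)_j = x_j + min(min_{m<j,i_m=i}(ν+X_m), min_{m≥j,i_m=i}X_m)
 − min(min_{m≤j,i_m=i}(ν+X_m), min_{m>j,i_m=i}X_m)` (empty minima being `+∞`, which is
realized below by taking a single `inf'` over all `m` with `i_m = i`). -/
theorem stmt13 {I : Type*} [DecidableEq I] (a : I → I → ℤ)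
    (ha2 : ∀ i, a i i = 2) (haneg : ∀ i j, i ≠ j → a i j ≤ 0)
    (hasym : ∀ i j, a i j = 0 → a j i = 0)
    (N : ℕ) (ik : Fin N → I) (i : I)
    (hSne : (Finset.univ.filter fun m : Fin N => ik m = i).Nonempty)
    (x : Fin N → ℤ)
    (X : Fin N → ℤ) (hX : ∀ m, X m = ∑ k ∈ Finset.Iic m, a (ik k) i * x k)
    (chi : ℤ)
    (hchi : chi = Finset.inf' (Finset.univ.filter fun m : Fin N => ik m = i) hSne X)
    (me mf : Fin N)
    (hme : ik me = i ∧ X me = chi ∧ ∀ l, ik l = i → X l = chi → l ≤ me)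
    (hmf : ik mf = i ∧ X mf = chi ∧ ∀ l, ik l = i → X l = chi → mf ≤ l) :
    ∀ j : Fin N,
      (x j
          + Finset.inf' (Finset.univ.filter fun m : Fin N => ik m = i) hSne
              (fun m => if m < j then 1 + X m else X m)
          - Finset.inf' (Finset.univ.filter fun m : Fin N => ik m = i) hSne
              (fun m => if m ≤ j then 1 + X m else X m)
        = x j - (if j = me then 1 else 0)) ∧
      (x j
          + Finset.inf' (Finset.univ.filter fun m : Fin N => ik m = i) hSne
              (fun m => if m < j then (-1) + X m else X m)
          - Finset.inf' (Finset.univ.filter fun m : Fin N => ik m = i) hSne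
              (fun m => if m ≤ j then (-1) + X m else X m)
        = x j + (if j = mf then 1 else 0)) :=
  stmt13_general N ik i hSne x X chi hchi me mf hme hmf
end

section
/- Let n ≥ 1, let a_{ij} be the type A_n Cartan matrix, ι = (i_k)_{k≥1} with i_k = ((k−1) mod n) + 1, and λ = Σ_{i=1}^n λ_iΛ_i with all λ_i ∈ ℤ_{≥0}. Then the polyhedral realization Σ_ι[λ] equals the set of all x ∈ ℤ^∞ such that, writing x_{j;i} := x_{(j−1)n+i} and with the convention x_{j;0} = 0: (i) x_{1;i} ≥ x_{2;i−1} ≥ ⋯ ≥ x_{i;1} ≥ 0 for all 1 ≤ i ≤ n; (ii) x_{j;i} = 0 whenever i + j > n + 1; and (iii) λ_i ≥ x_{j;i−j+1} − x_{j;i−j} for all 1 ≤ j ≤ i ≤ n. -/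
/-- The periodic sequence `ι = (i_k)_{k≥1}`, `i_k = ((k−1) mod n) + 1`. -/
def iota (n k : ℕ) : ℕ := (k - 1) % n + 1

/-- Evaluation of an affine-linear form `(c, (φ_k)_k)` at `x ∈ ℤ^∞`:
`φ(x) = c + Σ_k φ_k x_k`. -/
noncomputable def evalForm (φ : ℚ × (ℕ → ℚ)) (x : ℕ → ℤ) : ℚ :=
  φ.1 + ∑ᶠ k, φ.2 k * (x k : ℚ)

/-- Coefficients of `β_k^{(+)}(x) = x_k + Σ_{k<j<k⁺} a_{i_k,i_j} x_j + x_{k⁺}`; for the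
periodic sequence `ι` one has `k⁺ = k + n`. -/
def bplus (n k : ℕ) : ℕ → ℚ := fun j =>
  (if j = k then 1 else 0)
  + (if k < j ∧ j < k + n then (cartanA (iota n k) (iota n j) : ℚ) else 0)
  + (if j = k + n then 1 else 0)

/-- The affine-linear form `β_k^{(−)}`; for the periodic sequence `ι` one has `k⁻ = k − n`
(`= 0` when `k ≤ n`, in which case the constant term `−λ_{i_k}` appears). -/
def bminus (n : ℕ) (lam : ℕ → ℕ) (k : ℕ) : ℚ × (ℕ → ℚ) :=
  if n < k then
    (0, fun j =>
      (if j = k - n then 1 else 0)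
      + (if k - n < j ∧ j < k then (cartanA (iota n k) (iota n j) : ℚ) else 0)
      + (if j = k then 1 else 0))
  else
    (-(lam (iota n k) : ℚ), fun j =>
      (if 1 ≤ j ∧ j < k then (cartanA (iota n k) (iota n j) : ℚ) else 0)
      + (if j = k then 1 else 0))

/-- The operator `Ŝ_k`: `Ŝ_kφ = φ − φ_k β_k^{(+)}` if `φ_k > 0`, and
`Ŝ_kφ = φ − φ_k β_k^{(−)}` if `φ_k ≤ 0`. -/
def Shat (n : ℕ) (lam : ℕ → ℕ) (k : ℕ) (φ : ℚ × (ℕ → ℚ)) : ℚ × (ℕ → ℚ) :=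
  if 0 < φ.2 k then φ - φ.2 k • ((0 : ℚ), bplus n k) else φ - φ.2 k • bminus n lam k

/-- The form `λ^{(i)}(x) = λ_i − Σ_{1≤j<ι^{(i)}} a_{i,i_j} x_j − x_{ι^{(i)}}`; for the
periodic sequence `ι` one has `ι^{(i)} = i`. -/
def lamform (n : ℕ) (lam : ℕ → ℕ) (i : ℕ) : ℚ × (ℕ → ℚ) :=
  ((lam i : ℚ), fun j =>
    -(if 1 ≤ j ∧ j < i then (cartanA i (iota n j) : ℚ) else 0) - (if j = i then 1 else 0))

/-- `Ξ_ι[λ]`: the smallest set of affine-linear forms containing the coordinate forms `x_j`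
(`j ≥ 1`) and the forms `λ^{(i)}` (`1 ≤ i ≤ n`) and closed under all `Ŝ_k` (`k ≥ 1`). -/
inductive XiLam (n : ℕ) (lam : ℕ → ℕ) : (ℚ × (ℕ → ℚ)) → Prop
  | coord (j : ℕ) (hj : 1 ≤ j) : XiLam n lam (0, fun k => if k = j then 1 else 0)
  | lamf (i : ℕ) (hi : 1 ≤ i) (hi' : i ≤ n) : XiLam n lam (lamform n lam i)
  | shat (k : ℕ) (hk : 1 ≤ k) (φ : ℚ × (ℕ → ℚ)) (h : XiLam n lam φ) :
      XiLam n lam (Shat n lam k φ)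


/-!
Write the coordinates as `x_{a n + b}` with `a ≥ 0` and `1 ≤ b ≤ n`, and read them as the entries
`y a b` of a grid, extended by zero to `b = 0` and `b > n`. For the periodic `ι` one has
`k⁺ = k + n` and `k⁻ = k - n`, so `β_{an+b}^{(+)} = β_{(a+1)n+b}^{(−)}` is the grid expression
`y a b - y a (b+1) - y (a+1) (b-1) + y (a+1) b`, and the conditions of the theorem say
`y (a+1) (b-1) ≤ y a b` for all `a, b` and `y a b - y a (b-1) ≤ λ_{a+b}` for `a + b ≤ n`;
vanishing for `a + b > n` follows from the first family and the zero extension.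

Necessity: applying `Ŝ_k` to a form whose `k`-th coefficient is `1` subtracts `β_k^{(+)}`, so
starting from `x_{an+1}` and from `λ^{(i)}` one obtains the forms `y a b - y (a+1) (b-1)` and
`λ_{a+b} + y a (b-1) - y a b` inside `Ξ_ι[λ]`.

Sufficiency: by induction on `Ξ_ι[λ]`, each form is nonnegative on all admissible `x`. Since
`Ŝ_kφ(x) = φ(x) - φ_k β(x)`, either `φ_k β(x) ≤ 0` and `Ŝ_kφ(x) ≥ φ(x)`, or `Ŝ_kφ(x) = φ(x')`
where `x'` replaces `x_k` by `x_k - β(x)`; the sign of `β(x)` forced by the sign of `φ_k` is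
exactly what keeps `x'` admissible.
-/

namespace PolyhedralA

open Function

section Indexing

variable {n a b c d : ℕ}

lemma mul_add_lt_mul_add (hb : b ≤ n) (hd : 1 ≤ d) (h : a < c) : a * n + b < c * n + d := by
  nlinarith

lemma mul_add_lt_mul_add_iff (hb1 : 1 ≤ b) (hbn : b ≤ n) (hd1 : 1 ≤ d) (hdn : d ≤ n) :
    a * n + b < c * n + d ↔ a < c ∨ a = c ∧ b < d := by
  rcases lt_trichotomy a c with h | rfl | h
  · simp [h, mul_add_lt_mul_add hbn hd1 h]
  · omega
  · have := mul_add_lt_mul_add hdn hb1 h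
    omega

lemma mul_add_inj (hb1 : 1 ≤ b) (hbn : b ≤ n) (hd1 : 1 ≤ d) (hdn : d ≤ n) :
    a * n + b = c * n + d ↔ a = c ∧ b = d := by
  rcases lt_trichotomy a c with h | rfl | h
  · have := mul_add_lt_mul_add hbn hd1 h
    omega
  · omega
  · have := mul_add_lt_mul_add hdn hb1 h
    omega

lemma exists_eq_mul_add (hn : 1 ≤ n) {k : ℕ} (hk : 1 ≤ k) :
    ∃ a b, 1 ≤ b ∧ b ≤ n ∧ k = a * n + b := by
  refine ⟨(k - 1) / n, (k - 1) % n + 1, by omega, Nat.mod_lt _ (by omega), ?_⟩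
  have := Nat.div_add_mod (k - 1) n
  rw [Nat.mul_comm] at this
  omega

lemma iota_mul_add (hb1 : 1 ≤ b) (hbn : b ≤ n) : iota n (a * n + b) = b := by
  rw [iota, show a * n + b - 1 = b - 1 + a * n by omega, Nat.add_mul_mod_self_right,
    Nat.mod_eq_of_lt (by omega)]
  omega

lemma iota_of_le (hb1 : 1 ≤ b) (hbn : b ≤ n) : iota n b = b := by
  simpa using iota_mul_add (a := 0) hb1 hbn

end Indexing

/-- The paper's `x_{a+1;b}`, extended by zero outside `1 ≤ b ≤ n`. -/
def entry (n : ℕ) (x : ℕ → ℤ) (a b : ℕ) : ℤ := if 1 ≤ b ∧ b ≤ n then x (a * n + b) else 0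

def cellForm (n a b : ℕ) : ℚ × (ℕ → ℚ) :=
  (0, fun k => if 1 ≤ b ∧ b ≤ n ∧ k = a * n + b then 1 else 0)

def beta (n : ℕ) (x : ℕ → ℤ) (a b : ℕ) : ℤ :=
  entry n x a b - entry n x a (b + 1) - entry n x (a + 1) (b - 1) + entry n x (a + 1) b

section Entries

variable {n a b : ℕ} {x : ℕ → ℤ}

lemma entry_eq (hb1 : 1 ≤ b) (hbn : b ≤ n) : entry n x a b = x (a * n + b) := by
  simp [entry, hb1, hbn]

@[simp]
lemma entry_zero_right : entry n x a 0 = 0 := by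
  simp [entry]

lemma entry_of_lt (h : n < b) : entry n x a b = 0 := by
  simp [entry, show ¬b ≤ n by omega]

lemma entry_update (hb1 : 1 ≤ b) (hbn : b ≤ n) (v : ℤ) (c d : ℕ) :
    entry n (update x (a * n + b) v) c d = if c = a ∧ d = b then v else entry n x c d := by
  by_cases hd : 1 ≤ d ∧ d ≤ n
  · simp only [entry, hd, and_self, if_true, update_apply, mul_add_inj hd.1 hd.2 hb1 hbn]
  · have : ¬(c = a ∧ d = b) := by omega
    simp [entry, hd, this]

lemma cellForm_snd_mul_add {c d : ℕ} (hd1 : 1 ≤ d) (hdn : d ≤ n) :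
    (cellForm n a b).2 (c * n + d) = if a = c ∧ b = d then 1 else 0 := by
  have : (1 ≤ b ∧ b ≤ n ∧ c * n + d = a * n + b) ↔ (a = c ∧ b = d) := by
    constructor
    · rintro ⟨hb1, hbn, h⟩
      have := (mul_add_inj hd1 hdn hb1 hbn).1 h
      omega
    · rintro ⟨rfl, rfl⟩
      exact ⟨hd1, hdn, rfl⟩
  simp only [cellForm, this]

@[simp]
lemma cellForm_zero_right : cellForm n a 0 = 0 := by
  ext k <;> simp [cellForm]

lemma coordForm_eq_cellForm (hb1 : 1 ≤ b) (hbn : b ≤ n) :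
    ((0 : ℚ), fun k => if k = a * n + b then (1 : ℚ) else 0) = cellForm n a b := by
  simp [cellForm, hb1, hbn]

end Entries

section Forms

variable {n : ℕ}

lemma bplus_mul_add {a b : ℕ} (hb1 : 1 ≤ b) (hbn : b ≤ n) :
    ((0 : ℚ), bplus n (a * n + b)) = cellForm n a b - cellForm n a (b + 1)
      - cellForm n (a + 1) (b - 1) + cellForm n (a + 1) b := by
  refine Prod.ext (by simp [cellForm]) (funext fun k => ?_)
  simp only [Prod.snd_add, Prod.snd_sub, Pi.add_apply, Pi.sub_apply, bplus,
    iota_mul_add hb1 hbn, show a * n + b + n = (a + 1) * n + b by ring]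
  rcases Nat.eq_zero_or_pos k with rfl | hk
  · simp only [cellForm]
    split_ifs <;> first | (exfalso; omega) | simp_all
  obtain ⟨c, d, hd1, hdn, rfl⟩ := exists_eq_mul_add (hb1.trans hbn) hk
  simp only [iota_mul_add hd1 hdn, cellForm_snd_mul_add hd1 hdn, mul_add_inj hd1 hdn hb1 hbn,
    mul_add_lt_mul_add_iff hb1 hbn hd1 hdn, mul_add_lt_mul_add_iff hd1 hdn hb1 hbn, cartanA]
  split_ifs <;> first | (exfalso; omega) | norm_num

lemma bminus_of_lt {a b : ℕ} (lam : ℕ → ℕ) (hb1 : 1 ≤ b) (hbn : b ≤ n) :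
    bminus n lam ((a + 1) * n + b) = ((0 : ℚ), bplus n (a * n + b)) := by
  have hk : (a + 1) * n + b = a * n + b + n := by ring
  rw [bminus, if_pos (by omega), iota_mul_add hb1 hbn, hk, Nat.add_sub_cancel]
  unfold bplus
  rw [iota_mul_add hb1 hbn]

lemma bminus_of_le {b : ℕ} (lam : ℕ → ℕ) (hb1 : 1 ≤ b) (hbn : b ≤ n) :
    bminus n lam b = (-(lam b : ℚ), 0) + cellForm n 0 b - cellForm n 0 (b - 1) := by
  rw [bminus, if_neg (by omega), iota_of_le hb1 hbn]
  refine Prod.ext (by simp [cellForm]) (funext fun j => ?_)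
  by_cases hj : 1 ≤ j ∧ j < b
  · simp only [hj, and_self, if_true, iota_of_le hj.1 (by omega : j ≤ n), cartanA, cellForm,
      Prod.snd_add, Prod.snd_sub, Pi.sub_apply, zero_mul, zero_add]
    split_ifs <;> first | (exfalso; omega) | norm_num
  · simp only [hj, if_false, cellForm, Prod.snd_add, Prod.snd_sub, Pi.sub_apply, zero_mul,
      zero_add]
    split_ifs <;> first | (exfalso; omega) | norm_num

lemma lamform_eq {i : ℕ} (lam : ℕ → ℕ) (hi1 : 1 ≤ i) (hin : i ≤ n) :
    lamform n lam i = ((lam i : ℚ), 0) + cellForm n 0 (i - 1) - cellForm n 0 i := by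
  rw [lamform]
  refine Prod.ext (by simp [cellForm]) (funext fun j => ?_)
  by_cases hj : 1 ≤ j ∧ j < i
  · simp only [hj, and_self, if_true, iota_of_le hj.1 (by omega : j ≤ n), cartanA, cellForm,
      Prod.snd_add, Prod.snd_sub, Pi.sub_apply, zero_mul, zero_add]
    split_ifs <;> first | (exfalso; omega) | norm_num
  · simp only [hj, if_false, cellForm, Prod.snd_add, Prod.snd_sub, Pi.sub_apply, zero_mul,
      zero_add]
    split_ifs <;> first | (exfalso; omega) | norm_num

lemma Shat_of_coeff_eq_one (lam : ℕ → ℕ) {k : ℕ} {φ : ℚ × (ℕ → ℚ)} (h : φ.2 k = 1) :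
    Shat n lam k φ = φ - ((0 : ℚ), bplus n k) := by
  simp [Shat, h]

end Forms

section Evaluation

variable {x : ℕ → ℤ}

lemma hasFiniteSupport_mul (hx : (support x).Finite) (f : ℕ → ℚ) :
    HasFiniteSupport fun k => f k * (x k : ℚ) :=
  hx.subset fun k hk => by exact_mod_cast right_ne_zero_of_mul hk

lemma evalForm_add (hx : (support x).Finite) (φ ψ : ℚ × (ℕ → ℚ)) :
    evalForm (φ + ψ) x = evalForm φ x + evalForm ψ x := by
  simp only [evalForm, Prod.fst_add, Prod.snd_add, Pi.add_apply, add_mul]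
  rw [finsum_add_distrib (hasFiniteSupport_mul hx _) (hasFiniteSupport_mul hx _)]
  ring

lemma evalForm_smul (c : ℚ) (φ : ℚ × (ℕ → ℚ)) : evalForm (c • φ) x = c * evalForm φ x := by
  simp only [evalForm, Prod.smul_fst, Prod.smul_snd, Pi.smul_apply, smul_eq_mul, mul_add,
    mul_finsum, mul_assoc]

lemma evalForm_sub (hx : (support x).Finite) (φ ψ : ℚ × (ℕ → ℚ)) :
    evalForm (φ - ψ) x = evalForm φ x - evalForm ψ x := by
  rw [sub_eq_add_neg, ← neg_one_smul ℚ ψ, evalForm_add hx, evalForm_smul]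
  ring

lemma evalForm_const (c : ℚ) : evalForm (c, 0) x = c := by
  simp [evalForm]

lemma evalForm_cellForm (n a b : ℕ) : evalForm (cellForm n a b) x = entry n x a b := by
  simp only [evalForm, cellForm, entry, zero_add]
  split_ifs with h
  · rw [finsum_eq_single _ (a * n + b) fun k hk => by simp [hk]]
    simp [h]
  · have : ∀ k, ¬(1 ≤ b ∧ b ≤ n ∧ k = a * n + b) := fun _ hk => h ⟨hk.1, hk.2.1⟩
    simp [this]

lemma evalForm_update (hx : (support x).Finite) (φ : ℚ × (ℕ → ℚ)) (K : ℕ) (v : ℤ) :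
    evalForm φ (update x K v) = evalForm φ x + φ.2 K * (v - x K) := by
  have hK : HasFiniteSupport fun k => if k = K then φ.2 K * ((v : ℚ) - x K) else 0 :=
    (Set.finite_singleton K).subset fun k hk => by by_contra h; simp_all
  have hsplit : (fun k => φ.2 k * ((update x K v k : ℤ) : ℚ))
      = fun k => φ.2 k * x k + if k = K then φ.2 K * ((v : ℚ) - x K) else 0 := by
    funext k
    rcases eq_or_ne k K with rfl | h
    · simp
      ring
    · simp [h]
  simp only [evalForm]
  rw [hsplit, finsum_add_distrib (hasFiniteSupport_mul hx _) hK,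
    finsum_eq_single (fun k => if k = K then φ.2 K * ((v : ℚ) - x K) else 0) K
      fun k hk => by simp [hk]]
  simp only [if_true]
  ring

lemma evalForm_bplus (hx : (support x).Finite) {n a b : ℕ} (hb1 : 1 ≤ b) (hbn : b ≤ n) :
    evalForm ((0 : ℚ), bplus n (a * n + b)) x = beta n x a b := by
  rw [bplus_mul_add hb1 hbn]
  simp only [evalForm_add hx, evalForm_sub hx, evalForm_cellForm, beta]
  push_cast
  ring

lemma evalForm_bminus_of_le (hx : (support x).Finite) {n b : ℕ} (lam : ℕ → ℕ) (hb1 : 1 ≤ b)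
    (hbn : b ≤ n) :
    evalForm (bminus n lam b) x
      = ((-(lam b : ℤ) + entry n x 0 b - entry n x 0 (b - 1) : ℤ) : ℚ) := by
  rw [bminus_of_le lam hb1 hbn]
  simp only [evalForm_add hx, evalForm_sub hx, evalForm_cellForm, evalForm_const]
  push_cast
  ring

end Evaluation

structure Admissible (n : ℕ) (lam : ℕ → ℕ) (x : ℕ → ℤ) : Prop where
  mono : ∀ a b, entry n x (a + 1) (b - 1) ≤ entry n x a b
  bound : ∀ a b, a + b ≤ n → entry n x a b - entry n x a (b - 1) ≤ lam (a + b)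

namespace Admissible

variable {n : ℕ} {lam : ℕ → ℕ} {x : ℕ → ℤ}

lemma mono_succ (h : Admissible n lam x) (a b : ℕ) : entry n x (a + 1) b ≤ entry n x a (b + 1) :=
  h.mono a (b + 1)

lemma nonneg (h : Admissible n lam x) (a b : ℕ) : 0 ≤ entry n x a b := by
  induction b generalizing a with
  | zero => simp
  | succ b ih => exact (ih (a + 1)).trans (h.mono_succ a b)

lemma entry_eq_zero (h : Admissible n lam x) {a b : ℕ} (hab : n < a + b) : entry n x a b = 0 := by
  refine le_antisymm ?_ (h.nonneg a b)
  induction a generalizing b with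
  | zero => exact (entry_of_lt (by omega)).le
  | succ a ih => exact (h.mono_succ a b).trans (ih (by omega))

theorem update {a b : ℕ} (h : Admissible n lam x) (hb1 : 1 ≤ b) (hbn : b ≤ n) {v : ℤ}
    (hlo : entry n x (a + 1) (b - 1) ≤ v)
    (hhi : ∀ c, c + 1 = a → v ≤ entry n x c (b + 1))
    (hbd : a + b ≤ n → v - entry n x a (b - 1) ≤ lam (a + b))
    (hbd' : a + (b + 1) ≤ n → entry n x a (b + 1) - v ≤ lam (a + (b + 1))) :
    Admissible n lam (Function.update x (a * n + b) v) where
  mono c d := by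
    simp only [entry_update hb1 hbn]
    split_ifs with h1 h2 h2
    · omega
    · obtain ⟨rfl, rfl⟩ : c + 1 = a ∧ d = b + 1 := ⟨h1.1, by omega⟩
      exact hhi c rfl
    · obtain ⟨rfl, rfl⟩ := h2
      exact hlo
    · exact h.mono c d
  bound c d hcd := by
    simp only [entry_update hb1 hbn]
    split_ifs with h1 h2 h2
    · omega
    · obtain ⟨rfl, rfl⟩ := h1
      exact hbd hcd
    · obtain ⟨rfl, rfl⟩ : c = a ∧ d = b + 1 := ⟨h2.1, by omega⟩
      exact hbd' hcd
    · exact h.bound c d hcd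

theorem reflect_plus {a b : ℕ} (h : Admissible n lam x) (hb1 : 1 ≤ b) (hbn : b ≤ n)
    (hβ : 0 < beta n x a b) :
    Admissible n lam (Function.update x (a * n + b) (x (a * n + b) - beta n x a b)) := by
  rw [← entry_eq (x := x) hb1 hbn]
  unfold beta at *
  refine h.update hb1 hbn ?_ ?_ ?_ ?_
  · linarith [h.mono_succ a b]
  · rintro c rfl
    linarith [h.mono_succ c b]
  · intro hab
    linarith [h.bound a b hab]
  · intro hab
    have := h.bound (a + 1) b (by omega)
    rw [show a + 1 + b = a + (b + 1) by ring] at this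
    linarith

theorem reflect_minus {a b : ℕ} (h : Admissible n lam x) (hb1 : 1 ≤ b) (hbn : b ≤ n)
    (hβ : beta n x a b < 0) :
    Admissible n lam
      (Function.update x ((a + 1) * n + b) (x ((a + 1) * n + b) - beta n x a b)) := by
  rw [← entry_eq (x := x) (a := a + 1) hb1 hbn]
  unfold beta at *
  refine h.update hb1 hbn ?_ ?_ ?_ ?_
  · linarith [h.mono (a + 1) b]
  · rintro c hc
    obtain rfl : c = a := by omega
    linarith [h.mono c b]
  · intro hab
    have := h.bound a (b + 1) (by omega)
    rw [show a + (b + 1) = a + 1 + b by ring] at this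
    simp only [Nat.add_sub_cancel] at this
    linarith
  · intro hab
    have := h.bound (a + 1) (b + 1) hab
    simp only [Nat.add_sub_cancel] at this
    linarith

theorem reflect_low {b : ℕ} (h : Admissible n lam x) (hb1 : 1 ≤ b) (hbn : b ≤ n) :
    Admissible n lam (Function.update x b
      (x b - (-(lam b : ℤ) + entry n x 0 b - entry n x 0 (b - 1)))) := by
  have hxb : x b = entry n x 0 b := by rw [entry_eq hb1 hbn, zero_mul, zero_add]
  have hb := h.bound 0 b (by omega)
  rw [zero_add] at hb
  have key := h.update (a := 0) hb1 hbn
    (v := x b - (-(lam b : ℤ) + entry n x 0 b - entry n x 0 (b - 1)))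
    ?_ (fun c hc => absurd hc c.succ_ne_zero) ?_ ?_
  · rwa [zero_mul, zero_add] at key
  · linarith [h.mono 0 b]
  · intro
    rw [zero_add]
    linarith
  · intro hb'
    have := h.bound 0 (b + 1) hb'
    simp only [zero_add, Nat.add_sub_cancel] at this ⊢
    linarith

end Admissible

section Sufficiency

variable {n : ℕ} {lam : ℕ → ℕ}

lemma evalForm_sub_smul_nonneg {φ ψ : ℚ × (ℕ → ℚ)} {x : ℕ → ℤ} {K : ℕ} {B : ℤ}
    (hφ : ∀ y : ℕ → ℤ, (support y).Finite → Admissible n lam y → 0 ≤ evalForm φ y)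
    (hx : (support x).Finite) (h : Admissible n lam x) (hψ : evalForm ψ x = B)
    (hreflect : 0 < φ.2 K * B → Admissible n lam (update x K (x K - B))) :
    0 ≤ evalForm (φ - φ.2 K • ψ) x := by
  rw [evalForm_sub hx, evalForm_smul, hψ]
  by_cases hpos : 0 < φ.2 K * B
  · have hx' : (support (update x K (x K - B))).Finite := by
      rw [support_update_eq_ite]
      split_ifs
      exacts [hx.sdiff, hx.insert K]
    have := hφ _ hx' (hreflect hpos)
    rw [evalForm_update hx] at this
    push_cast at this
    linarith
  · linarith [hφ x hx h]

theorem evalForm_nonneg_of_xiLam (hn : 1 ≤ n) {φ : ℚ × (ℕ → ℚ)} (hφ : XiLam n lam φ) :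
    ∀ x : ℕ → ℤ, (support x).Finite → Admissible n lam x → 0 ≤ evalForm φ x := by
  induction hφ with
  | coord j hj =>
    intro x _ h
    obtain ⟨a, b, hb1, hbn, rfl⟩ := exists_eq_mul_add hn hj
    rw [coordForm_eq_cellForm hb1 hbn, evalForm_cellForm]
    exact_mod_cast h.nonneg a b
  | lamf i hi hin =>
    intro x hx h
    have hbound : ((entry n x 0 i - entry n x 0 (i - 1) : ℤ) : ℚ) ≤ lam i := by
      exact_mod_cast zero_add i ▸ h.bound 0 i (by omega)
    rw [lamform_eq lam hi hin, evalForm_sub hx, evalForm_add hx, evalForm_const,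
      evalForm_cellForm, evalForm_cellForm]
    push_cast at hbound
    linarith
  | shat k hk φ _ ih =>
    intro x hx h
    obtain ⟨a, b, hb1, hbn, rfl⟩ := exists_eq_mul_add hn hk
    unfold Shat
    split_ifs with hpos
    · exact evalForm_sub_smul_nonneg ih hx h (evalForm_bplus hx hb1 hbn) fun hB =>
        h.reflect_plus hb1 hbn (by exact_mod_cast pos_of_mul_pos_right hB hpos.le)
    rw [not_lt] at hpos
    rcases a with _ | a
    · rw [zero_mul, zero_add] at hpos ⊢
      exact evalForm_sub_smul_nonneg ih hx h (evalForm_bminus_of_le hx lam hb1 hbn) fun _ =>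
        h.reflect_low hb1 hbn
    · rw [bminus_of_lt lam hb1 hbn]
      exact evalForm_sub_smul_nonneg ih hx h (evalForm_bplus hx hb1 hbn) fun hB =>
        h.reflect_minus hb1 hbn (by exact_mod_cast neg_of_mul_pos_right hB hpos)

end Sufficiency

section Necessity

variable {n : ℕ}

def monoForm (n a b : ℕ) : ℚ × (ℕ → ℚ) := cellForm n a b - cellForm n (a + 1) (b - 1)

def boundForm (n : ℕ) (lam : ℕ → ℕ) (a b : ℕ) : ℚ × (ℕ → ℚ) :=
  ((lam (a + b) : ℚ), 0) + cellForm n a (b - 1) - cellForm n a b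

lemma Shat_monoForm (lam : ℕ → ℕ) {a b : ℕ} (hb1 : 1 ≤ b) (hbn : b ≤ n) :
    Shat n lam (a * n + b) (monoForm n a b) = monoForm n a (b + 1) := by
  have hcoeff : (monoForm n a b).2 (a * n + b) = 1 := by
    simp [monoForm, cellForm_snd_mul_add hb1 hbn]
  rw [Shat_of_coeff_eq_one lam hcoeff, bplus_mul_add hb1 hbn, monoForm, monoForm,
    Nat.add_sub_cancel]
  abel

lemma monoForm_mem (hn : 1 ≤ n) (lam : ℕ → ℕ) (a : ℕ) {b : ℕ} (hb1 : 1 ≤ b) (hbn : b ≤ n + 1) :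
    XiLam n lam (monoForm n a b) := by
  induction b, hb1 using Nat.le_induction with
  | base =>
    rw [show monoForm n a 1 = cellForm n a 1 by simp [monoForm],
      ← coordForm_eq_cellForm le_rfl hn]
    exact XiLam.coord _ (by omega)
  | succ b hb ih =>
    rw [← Shat_monoForm lam hb (by omega)]
    exact XiLam.shat _ (by omega) _ (ih (by omega))

lemma Shat_boundForm (lam : ℕ → ℕ) {a b : ℕ} (hb1 : 1 ≤ b) (hbn : b ≤ n) :
    Shat n lam (a * n + b) (boundForm n lam a (b + 1)) = boundForm n lam (a + 1) b := by
  have hcoeff : (boundForm n lam a (b + 1)).2 (a * n + b) = 1 := by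
    simp [boundForm, cellForm_snd_mul_add hb1 hbn]
  rw [Shat_of_coeff_eq_one lam hcoeff, bplus_mul_add hb1 hbn, boundForm, boundForm,
    Nat.add_sub_cancel, show a + 1 + b = a + (b + 1) by ring]
  abel

lemma boundForm_mem (lam : ℕ → ℕ) {a b : ℕ} (hb1 : 1 ≤ b) (hab : a + b ≤ n) :
    XiLam n lam (boundForm n lam a b) := by
  induction a generalizing b with
  | zero =>
    rw [boundForm, zero_add, ← lamform_eq lam hb1 (by omega)]
    exact XiLam.lamf b hb1 (by omega)
  | succ a ih =>
    rw [← Shat_boundForm lam hb1 (by omega)]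
    exact XiLam.shat _ (by omega) _ (ih (by omega) (by omega))

variable {lam : ℕ → ℕ} {x : ℕ → ℤ}

theorem admissible_of_forall_nonneg (hn : 1 ≤ n) (hx : (support x).Finite)
    (H : ∀ φ, XiLam n lam φ → 0 ≤ evalForm φ x) : Admissible n lam x where
  mono a b := by
    rcases Nat.lt_or_ge (n + 1) b with hb | hb
    · rw [entry_of_lt (by omega), entry_of_lt (by omega)]
    rcases Nat.eq_zero_or_pos b with rfl | hb1
    · simp
    have := H _ (monoForm_mem hn lam a hb1 hb)
    rw [monoForm, evalForm_sub hx, evalForm_cellForm, evalForm_cellForm] at this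
    exact_mod_cast sub_nonneg.1 this
  bound a b hab := by
    rcases Nat.eq_zero_or_pos b with rfl | hb1
    · simp
    have := H _ (boundForm_mem lam hb1 hab)
    rw [boundForm, evalForm_sub hx, evalForm_add hx, evalForm_const, evalForm_cellForm,
      evalForm_cellForm] at this
    have : ((entry n x a b - entry n x a (b - 1) : ℤ) : ℚ) ≤ lam (a + b) := by
      push_cast
      linarith
    exact_mod_cast this

theorem forall_evalForm_nonneg_iff (hn : 1 ≤ n) (hx : (support x).Finite) :
    (∀ φ, XiLam n lam φ → 0 ≤ evalForm φ x) ↔ Admissible n lam x :=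
  ⟨admissible_of_forall_nonneg hn hx, fun h _ hφ => evalForm_nonneg_of_xiLam hn hφ x hx h⟩

end Necessity

section Explicit

variable {n : ℕ} {lam : ℕ → ℕ} {x : ℕ → ℤ}

/-- The conditions (i)–(iii) of the theorem, with `x_{j;i} = x ((j - 1) * n + i)`. -/
def ExplicitConditions (n : ℕ) (lam : ℕ → ℕ) (x : ℕ → ℤ) : Prop :=
  (∀ i, 1 ≤ i → i ≤ n →
      (∀ j, 1 ≤ j → j < i → x (j * n + (i - j)) ≤ x ((j - 1) * n + (i - j + 1))) ∧
      0 ≤ x ((i - 1) * n + 1)) ∧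
    (∀ i j, 1 ≤ i → i ≤ n → 1 ≤ j → n + 1 < i + j → x ((j - 1) * n + i) = 0) ∧
    (∀ j i, 1 ≤ j → j ≤ i → i ≤ n →
      x ((j - 1) * n + (i - j + 1))
          - (if i - j = 0 then 0 else x ((j - 1) * n + (i - j))) ≤ (lam i : ℤ))

theorem Admissible.explicitConditions (hn : 1 ≤ n) (h : Admissible n lam x) :
    ExplicitConditions n lam x := by
  refine ⟨fun i hi1 hin => ⟨fun j hj1 hji => ?_, ?_⟩, fun i j hi1 hin hj1 hij => ?_,
    fun j i hj1 hji hin => ?_⟩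
  · have := h.mono (j - 1) (i - j + 1)
    rwa [Nat.sub_add_cancel hj1, Nat.add_sub_cancel, entry_eq (by omega) (by omega),
      entry_eq (by omega) (by omega)] at this
  · rw [← entry_eq (x := x) (a := i - 1) le_rfl hn]
    exact h.nonneg _ _
  · rw [← entry_eq (x := x) (a := j - 1) hi1 hin]
    exact h.entry_eq_zero (by omega)
  · have := h.bound (j - 1) (i - j + 1) (by omega)
    rw [Nat.add_sub_cancel, show j - 1 + (i - j + 1) = i by omega,
      entry_eq (by omega) (by omega)] at this
    split_ifs with h0
    · simpa [h0] using this
    · rwa [entry_eq (by omega) (by omega)] at this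

theorem admissible_of_explicitConditions (hn : 1 ≤ n) (h : ExplicitConditions n lam x) :
    Admissible n lam x := by
  obtain ⟨hmono, hzero, hbound⟩ := h
  have hvanish : ∀ a b, n < a + b → entry n x a b = 0 := by
    intro a b hab
    by_cases hb : 1 ≤ b ∧ b ≤ n
    · rw [entry_eq hb.1 hb.2]
      simpa using hzero b (a + 1) hb.1 hb.2 (by omega) (by omega)
    · simp [entry, hb]
  refine ⟨fun a b => ?_, fun a b hab => ?_⟩
  · by_cases hab : n < a + b
    · rw [hvanish a b hab]
      rcases Nat.eq_zero_or_pos b with rfl | hb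
      · simp
      · rw [hvanish _ _ (by omega)]
    obtain rfl | rfl | hb : b = 0 ∨ b = 1 ∨ 2 ≤ b := by omega
    · simp
    · simpa [entry_eq le_rfl hn] using (hmono (a + 1) (by omega) (by omega)).2
    · have := (hmono (a + b) (by omega) (by omega)).1 (a + 1) (by omega) (by omega)
      rw [show a + b - (a + 1) = b - 1 by omega, Nat.add_sub_cancel,
        Nat.sub_add_cancel (by omega : 1 ≤ b)] at this
      rwa [entry_eq (by omega) (by omega), entry_eq (by omega) (by omega)]
  · rcases Nat.eq_zero_or_pos b with rfl | hb1
    · simp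
    have := hbound (a + 1) (a + b) (by omega) (by omega) hab
    rw [show a + b - (a + 1) = b - 1 by omega, Nat.add_sub_cancel, Nat.sub_add_cancel hb1,
      ← entry_eq (x := x) (a := a) hb1 (by omega)] at this
    split_ifs at this with h0
    · simpa [h0] using this
    · rwa [entry_eq (b := b - 1) (by omega) (by omega)]

end Explicit

end PolyhedralA

theorem stmt14_general (n : ℕ) (hn : 1 ≤ n) (lam : ℕ → ℕ)
    (x : ℕ → ℤ) (hfin : (Function.support x).Finite) :
    (∀ φ : ℚ × (ℕ → ℚ), XiLam n lam φ → 0 ≤ evalForm φ x)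
    ↔
    ((∀ i, 1 ≤ i → i ≤ n →
        (∀ j, 1 ≤ j → j < i → x (j * n + (i - j)) ≤ x ((j - 1) * n + (i - j + 1))) ∧
        0 ≤ x ((i - 1) * n + 1)) ∧
      (∀ i j, 1 ≤ i → i ≤ n → 1 ≤ j → n + 1 < i + j → x ((j - 1) * n + i) = 0) ∧
      (∀ j i, 1 ≤ j → j ≤ i → i ≤ n →
        x ((j - 1) * n + (i - j + 1))
            - (if i - j = 0 then 0 else x ((j - 1) * n + (i - j))) ≤ (lam i : ℤ))) :=
  (PolyhedralA.forall_evalForm_nonneg_iff hn hfin).trans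
    ⟨PolyhedralA.Admissible.explicitConditions hn, PolyhedralA.admissible_of_explicitConditions hn⟩

/-- For type `A_n`, the periodic sequence `ι` and a dominant weight `λ = Σ λ_iΛ_i`, a sequence
`x ∈ ℤ^∞` lies in the polyhedral realization `Σ_ι[λ] = {x : φ(x) ≥ 0 ∀ φ ∈ Ξ_ι[λ]}` iff
(writing `x_{j;i} = x_{(j−1)n+i}`, `x_{j;0} = 0`): (i) `x_{1;i} ≥ x_{2;i−1} ≥ ⋯ ≥ x_{i;1} ≥ 0`
for `1 ≤ i ≤ n`; (ii) `x_{j;i} = 0` when `i + j > n + 1`; (iii) `λ_i ≥ x_{j;i−j+1} − x_{j;i−j}`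
for `1 ≤ j ≤ i ≤ n`. -/
theorem stmt14 (n : ℕ) (hn : 1 ≤ n) (lam : ℕ → ℕ)
    (x : ℕ → ℤ) (hx_zero : x 0 = 0) (hfin : (Function.support x).Finite) :
    (∀ φ : ℚ × (ℕ → ℚ), XiLam n lam φ → 0 ≤ evalForm φ x)
    ↔
    ((∀ i, 1 ≤ i → i ≤ n →
        (∀ j, 1 ≤ j → j < i → x (j * n + (i - j)) ≤ x ((j - 1) * n + (i - j + 1))) ∧
        0 ≤ x ((i - 1) * n + 1)) ∧
      (∀ i j, 1 ≤ i → i ≤ n → 1 ≤ j → n + 1 < i + j → x ((j - 1) * n + i) = 0) ∧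
      (∀ j i, 1 ≤ j → j ≤ i → i ≤ n →
        x ((j - 1) * n + (i - j + 1))
            - (if i - j = 0 then 0 else x ((j - 1) * n + (i - j))) ≤ (lam i : ℤ))) :=
  stmt14_general n hn lam x hfin
end

section
/- In the type A_n monomial realization of crystals with cyclic order p_{i,j} = 1 for i < j and p_{i,j} = 0 for i > j, the following hold for all 1 ≤ i ≤ n and 1 ≤ k ≤ n, with the convention Y_{m,0} = Y_{m,n+1} = 1: (i) f̃_k f̃_{k−1} ⋯ f̃_1 ( Y_{n−i+1,1} ) = Y_{n−i+1,k+1} · Y_{n−i+2,k}^{−1}, in particular all these monomials are nonzero; and (ii) ẽ_k ẽ_{k−1} ⋯ ẽ_1 ( Y_{i,1}^{−1} ) = Y_{i−k,k} · Y_{i−k,k+1}^{−1}. -/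
/-!
Every monomial along both chains has exactly one factor `Y_{m,j}^{±1}` in the column `j` that the
next operator acts on. For such a monomial the partial sums in that column are a step function,
so `φ_j`, `ε_j` and the position `n_f` or `n_e` can be read off directly: `f̃_j` divides by
`A_{m,j}` and `ẽ_j` multiplies by `A_{m-1,j}`, which moves the pair of factors one column to the
right. Induction on `k` then gives both formulas.
-/

/-- A monomial `Y = ∏_{m∈ℤ, 1≤i≤n} Y_{m,i}^{l_{m,i}}` is encoded by its exponents
`l : ℤ → ℕ → ℤ` (finitely supported in the cases of interest). -/
abbrev Mono := ℤ → ℕ → ℤ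

/-- The partial sum `S_k = Σ_{m≤k} l_{m,i}`. -/
noncomputable def psum (l : Mono) (i : ℕ) (k : ℤ) : ℤ := ∑ᶠ m ∈ Set.Iic k, l m i

/-- `φ_i(Y) = max_{k∈ℤ} Σ_{m≤k} l_{m,i}`. -/
noncomputable def phiM (l : Mono) (i : ℕ) : ℤ := sSup (Set.range (psum l i))

/-- `wt(Y)(h_i) = Σ_m l_{m,i}`. -/
noncomputable def wtM (l : Mono) (i : ℕ) : ℤ := ∑ᶠ m, l m i

/-- `ε_i(Y) = φ_i(Y) − wt(Y)(h_i)`. -/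
noncomputable def epsM (l : Mono) (i : ℕ) : ℤ := phiM l i - wtM l i

/-- Exponents of the monomial `A_{m,i}` for type `A_n` with the cyclic order `p_{i,j} = 1`
(`i<j`), `0` (`i>j`): `A_{m,i} = Y_{m,i} Y_{m+1,i} Y_{m,i+1}^{−1} Y_{m+1,i−1}^{−1}`, the
factors `Y_{·,0}` and `Y_{·,n+1}` being absent. -/
def Aexp (n : ℕ) (m : ℤ) (i : ℕ) : Mono := fun m' i' =>
  (if m' = m ∧ i' = i then 1 else 0) + (if m' = m + 1 ∧ i' = i then 1 else 0)
  + (if m' = m ∧ i' = i + 1 ∧ i + 1 ≤ n then -1 else 0)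
  + (if m' = m + 1 ∧ i' + 1 = i ∧ 1 ≤ i' then -1 else 0)

/-- The Kashiwara operator `f̃_i` on monomials (`none` encodes `0`):
`f̃_i(Y) = A_{n_f,i}^{−1}·Y` if `φ_i(Y) > 0`, with
`n_f = min{k : Σ_{m≤k} l_{m,i} = φ_i(Y)}`, and `f̃_i(Y) = 0` if `φ_i(Y) = 0`. -/
noncomputable def ftil (n i : ℕ) (Y : Option Mono) : Option Mono :=
  Y.bind fun l =>
    if 0 < phiM l i then some (l - Aexp n (sInf {k : ℤ | psum l i k = phiM l i}) i) else none

/-- The Kashiwara operator `ẽ_i` on monomials (`none` encodes `0`):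
`ẽ_i(Y) = A_{n_e,i}·Y` if `ε_i(Y) > 0`, with
`n_e = max{k : Σ_{m≤k} l_{m,i} = φ_i(Y)}`, and `ẽ_i(Y) = 0` if `ε_i(Y) = 0`. -/
noncomputable def etil (n i : ℕ) (Y : Option Mono) : Option Mono :=
  Y.bind fun l =>
    if 0 < epsM l i then some (l + Aexp n (sSup {k : ℤ | psum l i k = phiM l i}) i) else none

lemma finsum_mem_Iic_ite_eq {α M : Type*} [LinearOrder α] [AddCommMonoid M]
    (a K : α) (c : M) :
    ∑ᶠ m ∈ Set.Iic K, (if m = a then c else 0) = if a ≤ K then c else 0 := by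
  rw [finsum_mem_def, finsum_eq_single _ a]
  · simp [Set.indicator, Set.mem_Iic]
  · intro b hb
    simp [Set.indicator, hb]

lemma finsum_ite_eq {α M : Type*} [DecidableEq α] [AddCommMonoid M] (a : α) (c : M) :
    ∑ᶠ m, (if m = a then c else 0) = c := by
  rw [finsum_eq_single _ a fun b hb => by simp [hb]]
  simp

section SingleColumn

variable {l : Mono} {i : ℕ} {a c : ℤ}

lemma psum_of_column_eq_single (hl : ∀ m, l m i = if m = a then c else 0) :
    psum l i = fun K => if a ≤ K then c else 0 := by
  funext K
  rw [psum, finsum_mem_congr rfl fun m _ => hl m, finsum_mem_Iic_ite_eq]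

lemma phiM_of_column_eq_single (hl : ∀ m, l m i = if m = a then c else 0) :
    phiM l i = max c 0 := by
  have hrange : Set.range (fun K => if a ≤ K then c else 0) = {c, 0} := by
    ext x
    constructor
    · rintro ⟨K, rfl⟩
      dsimp only
      split_ifs <;> simp
    · rintro (rfl | rfl)
      exacts [⟨a, if_pos le_rfl⟩, ⟨a - 1, if_neg (by omega)⟩]
  rw [phiM, psum_of_column_eq_single hl, hrange, csSup_pair]

lemma wtM_of_column_eq_single (hl : ∀ m, l m i = if m = a then c else 0) : wtM l i = c := by
  rw [wtM, finsum_congr hl, finsum_ite_eq]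

/-- With a single positive factor `Y_{a,i}^c`, the partial sums reach their maximum `c` first
at `k = a`. -/
lemma ftil_of_column_eq_single (n : ℕ) (hl : ∀ m, l m i = if m = a then c else 0)
    (hc : 0 < c) : ftil n i (some l) = some (l - Aexp n a i) := by
  have hphi : phiM l i = c := by rw [phiM_of_column_eq_single hl, max_eq_left hc.le]
  have hargmax : {k : ℤ | psum l i k = phiM l i} = Set.Ici a := by
    ext K
    simp only [Set.mem_ofPred_eq, Set.mem_Ici, psum_of_column_eq_single hl, hphi]
    split_ifs <;> omega
  simp only [ftil, Option.bind_some]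
  rw [hargmax, csInf_Ici, hphi, if_pos hc]

/-- With a single negative factor `Y_{a,i}^c`, the partial sums reach their maximum `0` last
at `k = a - 1`. -/
lemma etil_of_column_eq_single (n : ℕ) (hl : ∀ m, l m i = if m = a then c else 0)
    (hc : c < 0) : etil n i (some l) = some (l + Aexp n (a - 1) i) := by
  have hphi : phiM l i = 0 := by rw [phiM_of_column_eq_single hl, max_eq_right hc.le]
  have heps : 0 < epsM l i := by rw [epsM, hphi, wtM_of_column_eq_single hl]; omega
  have hargmax : {k : ℤ | psum l i k = phiM l i} = Set.Iic (a - 1) := by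
    ext K
    simp only [Set.mem_ofPred_eq, Set.mem_Iic, psum_of_column_eq_single hl, hphi]
    split_ifs <;> omega
  simp only [etil, Option.bind_some]
  rw [hargmax, csSup_Iic, if_pos heps]

end SingleColumn

lemma List.foldl_range_of_step {α : Type*} (F : ℕ → α → α) (L : ℕ → α) {N : ℕ}
    (hF : ∀ j, j + 1 ≤ N → F j (L j) = L (j + 1)) {K : ℕ} (hK : K ≤ N) :
    (List.range K).foldl (fun Y j => F j Y) (L 0) = L K := by
  induction K with
  | zero => rfl
  | succ K ih =>
    rw [List.range_succ, List.foldl_append, ih (by omega)]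
    exact hF K hK

/-- `Y_{M,k+1} Y_{M+1,k}^{-1}`, the monomial `f̃_k ⋯ f̃_1 Y_{M,1}`. -/
def fChainMono (n : ℕ) (M : ℤ) (k : ℕ) : Mono := fun m' i' =>
  (if m' = M ∧ i' = k + 1 ∧ k + 1 ≤ n then 1 else 0)
    + (if m' = M + 1 ∧ i' = k ∧ 1 ≤ k then -1 else 0)

/-- `Y_{a-k,k} Y_{a-k,k+1}^{-1}`, the monomial `ẽ_k ⋯ ẽ_1 Y_{a,1}^{-1}`. -/
def eChainMono (n : ℕ) (a : ℤ) (k : ℕ) : Mono := fun m' i' =>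
  (if m' = a - k ∧ i' = k ∧ 1 ≤ k then 1 else 0)
    + (if m' = a - k ∧ i' = k + 1 ∧ k + 1 ≤ n then -1 else 0)

section Chains

variable {n : ℕ}

lemma ftil_fChainMono {j : ℕ} (M : ℤ) (hj : j + 1 ≤ n) :
    ftil n (j + 1) (some (fChainMono n M j)) = some (fChainMono n M (j + 1)) := by
  have hcol : ∀ m, fChainMono n M j m (j + 1) = if m = M then 1 else 0 := by
    intro m
    simp only [fChainMono, true_and]
    split_ifs <;> omega
  rw [ftil_of_column_eq_single n hcol Int.one_pos]
  congr 1
  funext m' i'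
  simp only [Pi.sub_apply, fChainMono, Aexp]
  split_ifs <;> omega

lemma etil_eChainMono {j : ℕ} (a : ℤ) (hj : j + 1 ≤ n) :
    etil n (j + 1) (some (eChainMono n a j)) = some (eChainMono n a (j + 1)) := by
  have hcol : ∀ m, eChainMono n a j m (j + 1) = if m = a - j then -1 else 0 := by
    intro m
    simp only [eChainMono, true_and]
    split_ifs <;> omega
  rw [etil_of_column_eq_single n hcol (by omega)]
  congr 1
  funext m' i'
  simp only [Pi.add_apply, eChainMono, Aexp]
  split_ifs <;> omega

lemma foldl_ftil_single {k : ℕ} (M : ℤ) (hk : 1 ≤ k) (hkn : k ≤ n) :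
    (List.range k).foldl (fun Y j => ftil n (j + 1) Y)
        (some fun m' i' => if m' = M ∧ i' = 1 then 1 else 0)
      = some fun m' i' =>
          (if m' = M ∧ i' = k + 1 ∧ k + 1 ≤ n then 1 else 0)
          + (if m' = M + 1 ∧ i' = k then -1 else 0) := by
  have hstart : (fun m' i' => if m' = M ∧ i' = 1 then (1 : ℤ) else 0) = fChainMono n M 0 := by
    funext m' i'
    simp only [fChainMono]
    split_ifs <;> omega
  rw [hstart, List.foldl_range_of_step (fun j => ftil n (j + 1)) (fun j => some (fChainMono n M j))
    (fun j hj => ftil_fChainMono M hj) hkn]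
  congr 1
  funext m' i'
  simp only [fChainMono]
  split_ifs <;> omega

lemma foldl_etil_single {k : ℕ} (a : ℤ) (hk : 1 ≤ k) (hkn : k ≤ n) :
    (List.range k).foldl (fun Y j => etil n (j + 1) Y)
        (some fun m' i' => if m' = a ∧ i' = 1 then -1 else 0)
      = some fun m' i' =>
          (if m' = a - k ∧ i' = k then 1 else 0)
          + (if m' = a - k ∧ i' = k + 1 ∧ k + 1 ≤ n then -1 else 0) := by
  have hstart : (fun m' i' => if m' = a ∧ i' = 1 then (-1 : ℤ) else 0) = eChainMono n a 0 := by
    funext m' i'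
    simp only [eChainMono]
    split_ifs <;> omega
  rw [hstart, List.foldl_range_of_step (fun j => etil n (j + 1)) (fun j => some (eChainMono n a j))
    (fun j hj => etil_eChainMono a hj) hkn]
  congr 1
  funext m' i'
  simp only [eChainMono]
  split_ifs <;> omega

end Chains

theorem stmt16_general (n i k : ℕ) (hk : 1 ≤ k) (hkn : k ≤ n) :
    ((List.range k).foldl (fun Y j => ftil n (j + 1) Y)
        (some fun m' i' => if m' = ((n - i + 1 : ℕ) : ℤ) ∧ i' = 1 then 1 else 0)
      = some fun m' i' =>
          (if m' = ((n - i + 1 : ℕ) : ℤ) ∧ i' = k + 1 ∧ k + 1 ≤ n then 1 else 0)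
          + (if m' = ((n - i + 2 : ℕ) : ℤ) ∧ i' = k then -1 else 0)) ∧
    ((List.range k).foldl (fun Y j => etil n (j + 1) Y)
        (some fun m' i' => if m' = (i : ℤ) ∧ i' = 1 then -1 else 0)
      = some fun m' i' =>
          (if m' = (i : ℤ) - k ∧ i' = k then 1 else 0)
          + (if m' = (i : ℤ) - k ∧ i' = k + 1 ∧ k + 1 ≤ n then -1 else 0)) := by
  have hM : ((n - i + 2 : ℕ) : ℤ) = ((n - i + 1 : ℕ) : ℤ) + 1 := by push_cast; ring
  rw [hM]
  exact ⟨foldl_ftil_single _ hk hkn, foldl_etil_single _ hk hkn⟩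

/-- Proposition 6.2: in the type `A_n` monomial realization,
`f̃_k⋯f̃_1(Y_{n−i+1,1}) = Y_{n−i+1,k+1}·Y_{n−i+2,k}^{−1}` and
`ẽ_k⋯ẽ_1(Y_{i,1}^{−1}) = Y_{i−k,k}·Y_{i−k,k+1}^{−1}` for all `1 ≤ i ≤ n`, `1 ≤ k ≤ n`
(conventions `Y_{m,0} = Y_{m,n+1} = 1`); in particular all these monomials are nonzero. -/
theorem stmt16 (n i k : ℕ) (hn : 1 ≤ n) (hi : 1 ≤ i) (hin : i ≤ n)
    (hk : 1 ≤ k) (hkn : k ≤ n) :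
    ((List.range k).foldl (fun Y j => ftil n (j + 1) Y)
        (some fun m' i' => if m' = ((n - i + 1 : ℕ) : ℤ) ∧ i' = 1 then 1 else 0)
      = some fun m' i' =>
          (if m' = ((n - i + 1 : ℕ) : ℤ) ∧ i' = k + 1 ∧ k + 1 ≤ n then 1 else 0)
          + (if m' = ((n - i + 2 : ℕ) : ℤ) ∧ i' = k then -1 else 0)) ∧
    ((List.range k).foldl (fun Y j => etil n (j + 1) Y)
        (some fun m' i' => if m' = (i : ℤ) ∧ i' = 1 then -1 else 0)
      = some fun m' i' =>
          (if m' = (i : ℤ) - k ∧ i' = k then 1 else 0)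
          + (if m' = (i : ℤ) - k ∧ i' = k + 1 ∧ k + 1 ≤ n then -1 else 0)) :=
  stmt16_general n i k hk hkn
end

section
/- Let t = diag(t_1, …, t_{n+1}) ∈ SL_{n+1}(ℂ) and g = t·Θ(c). Then the decoration evaluates as f_B(g) := Σ_{i=1}^{n} ( Δ^{(1)}_i(g) + Δ^{(2)}_i(g) ) / Δ^{(0)}_i(g) = Σ_{j=1}^{n} [ Δ^{(1)}_j(Θ(c)) + (t_j/t_{j+1}) · minor of Θ(c) on rows {j} ∪ {j+2,…,n+1} and columns {1,…,n+1−j} ], where Δ^{(1)}_i(g) is the minor of g on rows {n+2−i,…,n+1} and columns {1,…,i−1,i+1}, Δ^{(2)}_i(g) is the minor of g on rows {n+1−i} ∪ {n+3−i,…,n+1} and columns {1,…,i}, and Δ^{(0)}_i(g) is the minor of g on rows {n+2−i,…,n+1} and columns {1,…,i}; in particular all the denominators Δ^{(0)}_i(g) are nonzero. -/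
/-!
Left multiplication by `t` multiplies a minor by the product of the `t_r` over its rows, so the
identity reduces to the fact that the minors of `Θ(c)` on its last `s` rows and first `s` columns
all equal `1`. Write `Θ(c) = R_1 ⋯ R_n`, where `R_k = 𝐲_1(c_{k,1}) ⋯ 𝐲_{n+1-k}(c_{k,n+1-k})` is
lower bidiagonal with unit subdiagonal on its top block of size `m = n + 2 - k` and the identity
below it. Then `R_k ⋯ R_n` is also the identity below that block, and row `2 ≤ r ≤ m` of `R_k S`
is `S_{r-1} + d_r S_r`; so the minor of `R_k ⋯ R_n` on rows `m-s+1, …, m` and columns `1, …, s` is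
an upper unitriangular transform of the minor of `R_{k+1} ⋯ R_n` one row higher. Shifting up row
by row ends at a full leading block, whose determinant is `det (R_j ⋯ R_n) = 1`.
-/

open Matrix

section Minors

variable {K : Type*} [CommRing K] {N : ℕ}

theorem mul_apply_of_row_eq_one {ι : Type*} [Fintype ι] [DecidableEq ι]
    {R : Matrix ι ι K} {r : ι} (hR : R r = (1 : Matrix ι ι K) r) (S : Matrix ι ι K) (q : ι) :
    (R * S) r q = S r q := by
  simp only [mul_apply, hR, one_apply, ite_mul, one_mul, zero_mul, Finset.sum_ite_eq,
    Finset.mem_univ, if_true]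

/-- The minor on rows `p, …, p + s - 1` and columns `0, …, s - 1` (0-based). -/
def leftMinor (M : Matrix (Fin N) (Fin N) K) (p s : ℕ) (h : p + s ≤ N) : K :=
  (M.submatrix (fun a : Fin s => (⟨p + a, by omega⟩ : Fin N))
    (fun a : Fin s => (⟨a, by omega⟩ : Fin N))).det

theorem leftMinor_zero_eq_det (M : Matrix (Fin N) (Fin N) K) (s : ℕ) (h : 0 + s ≤ N)
    (hM : ∀ r : Fin N, s ≤ r → M r = (1 : Matrix (Fin N) (Fin N) K) r) :
    leftMinor M 0 s h = M.det := by
  have hlow : toSquareBlockProp M (fun r => ¬ (r : ℕ) < s) = 1 := by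
    ext ⟨r, hr⟩ ⟨q, hq⟩
    simp [toSquareBlockProp, toBlock, hM r (by omega), one_apply]
  rw [M.twoBlockTriangular_det (fun r => (r : ℕ) < s)
      (fun r hr q hq => by simp [hM r (by omega), one_apply]; omega),
    hlow, det_one, mul_one, leftMinor,
    ← det_submatrix_equiv_self (Fin.castLEquiv (by omega : s ≤ N))]
  congr 1
  ext a b
  simp only [toSquareBlockProp, toBlock, submatrix_apply, Fin.castLEquiv_apply, zero_add]
  rfl

theorem leftMinor_mul_of_bidiagonal (R S : Matrix (Fin N) (Fin N) K) (p s : ℕ)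
    (h : p + s + 1 ≤ N) (d : Fin s → K)
    (hR : ∀ a : Fin s, ∀ k : Fin N, R ⟨p + 1 + a, by omega⟩ k =
      (if k = ⟨p + a, by omega⟩ then 1 else 0) + (if k = ⟨p + 1 + a, by omega⟩ then d a else 0))
    (hS : ∀ q : Fin N, (q : ℕ) < s → S ⟨p + s, by omega⟩ q = 0) :
    leftMinor (R * S) (p + 1) s (by omega) = leftMinor S p s (by omega) := by
  set S' := S.submatrix (fun a : Fin s => (⟨p + a, by omega⟩ : Fin N))
    (fun a : Fin s => (⟨a, by omega⟩ : Fin N))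
  set U : Matrix (Fin s) (Fin s) K := of fun a b =>
    if b = a then 1 else if (b : ℕ) = a + 1 then d a else 0
  have hU : U.det = 1 := by
    rw [det_of_isUpperTriangular (fun a b (hba : b < a) => by simp [U, hba.ne]; omega)]
    simp [U]
  have hfactor : (R * S).submatrix (fun a : Fin s => (⟨p + 1 + a, by omega⟩ : Fin N))
      (fun a : Fin s => (⟨a, by omega⟩ : Fin N)) = U * S' := by
    ext a b
    have hrow : ∑ k, R ⟨p + 1 + a, by omega⟩ k * S k ⟨b, by omega⟩ =
        S' a b + d a * S ⟨p + 1 + a, by omega⟩ ⟨b, by omega⟩ := by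
      simp [hR, add_mul, Finset.sum_add_distrib, S']
    rw [submatrix_apply, mul_apply, hrow, mul_apply]
    by_cases ha : (a : ℕ) + 1 < s
    · rw [Finset.sum_eq_add a ⟨a + 1, ha⟩ (by simp [Fin.ext_iff])
        (fun k _ hk => by simp [U, hk.1]; simp [Fin.ext_iff] at hk; omega) (by simp) (by simp)]
      simp only [U, S', of_apply, submatrix_apply, if_pos,
        if_neg (show (⟨a + 1, ha⟩ : Fin s) ≠ a by simp [Fin.ext_iff]), one_mul, Nat.add_right_comm p 1,
        Nat.add_assoc p]
    · rw [Finset.sum_eq_single a (fun k _ hk => by simp [U, hk]; omega) (by simp),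
        show (⟨p + 1 + a, _⟩ : Fin N) = ⟨p + s, by omega⟩ by ext; simp; omega,
        hS _ (by simp)]
      simp [U]
  rw [leftMinor, leftMinor, hfactor, det_mul, hU, one_mul]

structure IsBidiagonalBlock (m : ℕ) (R : Matrix (Fin N) (Fin N) K) : Prop where
  row_of_le : ∀ r : Fin N, (r : ℕ) ≤ m → ∀ k,
    R r k = (if (k : ℕ) + 1 = r then 1 else 0) + (if k = r then R r r else 0)
  row_of_gt : ∀ r : Fin N, m < r → R r = (1 : Matrix (Fin N) (Fin N) K) r

theorem det_submatrix_diagonal_mul {ι κ K : Type*} [Fintype ι] [DecidableEq ι] [Fintype κ]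
    [DecidableEq κ] [CommRing K] (d : ι → K) (M : Matrix ι ι K) (f g : κ → ι) :
    ((diagonal d * M).submatrix f g).det = (∏ a, d (f a)) * (M.submatrix f g).det := by
  rw [show (diagonal d * M).submatrix f g = diagonal (d ∘ f) * M.submatrix f g by
    ext; simp [diagonal_mul], det_mul, det_diagonal]
  rfl

theorem det_submatrix_congr_fin {s t : ℕ}
    (M : Matrix (Fin N) (Fin N) K) (h : s = t) (f g : Fin s → Fin N) (f' g' : Fin t → Fin N)
    (hf : ∀ a, f' (Fin.cast h a) = f a) (hg : ∀ a, g' (Fin.cast h a) = g a) :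
    (M.submatrix f g).det = (M.submatrix f' g').det := by
  subst h
  obtain rfl : f' = f := funext fun a => by simpa using hf a
  obtain rfl : g' = g := funext fun a => by simpa using hg a
  rfl

end Minors

theorem mul_Yb_apply_s18 {n : ℕ} (M : Matrix (Fin (n+1)) (Fin (n+1)) ℂ) (j : ℕ) (hj : j + 1 ≤ n)
    (b : ℂ) (r q : Fin (n+1)) :
    (M * Yb n (j+1) b) r q =
      (M r q + if (q : ℕ) = j then b * M r ⟨j + 1, by omega⟩ else 0) *
        (if (q : ℕ) = j then b⁻¹ else if (q : ℕ) = j + 1 then b else 1) := by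
  rw [Yb, ← Matrix.mul_assoc, alco, mul_diagonal, ym, Matrix.mul_add, Matrix.mul_one,
    Matrix.mul_smul, Matrix.add_apply, Matrix.smul_apply, mul_apply]
  congr 1
  · by_cases hq : (q : ℕ) = j
    · rw [Finset.sum_eq_single ⟨j + 1, by omega⟩ (fun k _ hk => by
        simp [Em, Fin.ext_iff] at hk ⊢; omega) (by simp)]
      simp [Em, hq]
    · simp [Em, hq]
  · simp only [Nat.add_right_cancel_iff, inv_inv]

theorem det_Yb {n : ℕ} (j : ℕ) (hj : j + 1 ≤ n) (b : ℂ) (hb : b ≠ 0) :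
    (Yb n (j+1) b).det = 1 := by
  have hym : ym n (j+1) b = transvection ⟨j + 1, by omega⟩ ⟨j, by omega⟩ b := by
    ext r q
    simp only [ym, transvection, Em, single_apply, Matrix.add_apply, Matrix.smul_apply, of_apply,
      Fin.ext_iff, smul_eq_mul, mul_ite, mul_one, mul_zero]
    exact congrArg _ (if_congr (by omega) rfl rfl)
  rw [Yb, det_mul, hym, det_transvection_of_ne _ _ (by simp [Fin.ext_iff]), one_mul, alco,
    det_diagonal, Finset.prod_eq_mul ⟨j, by omega⟩ ⟨j + 1, by omega⟩ (by simp [Fin.ext_iff])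
      (fun k _ hk => by
        have h1 := Fin.val_ne_of_ne hk.1
        have h2 := Fin.val_ne_of_ne hk.2
        simp only at h1 h2
        rw [if_neg (by omega), if_neg (by omega)]) (by simp) (by simp)]
  simp [hb]

theorem IsBidiagonalBlock.mul_Yb {n j : ℕ} (hj : j + 1 ≤ n) {R : Matrix (Fin (n+1)) (Fin (n+1)) ℂ}
    (hR : IsBidiagonalBlock j R) {b : ℂ} (hb : b ≠ 0) :
    IsBidiagonalBlock (j + 1) (R * Yb n (j+1) b) := by
  obtain ⟨hle, hgt⟩ := hR
  refine ⟨fun r hr k => ?_, fun r hr => ?_⟩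
  · rw [mul_Yb_apply_s18 _ _ hj, mul_Yb_apply_s18 _ _ hj]
    rcases Nat.lt_or_ge (r : ℕ) (j + 1) with hrj | hrj
    · have h0 : R r ⟨j + 1, by omega⟩ = 0 := by
        rw [hle r (by omega), if_neg (by simp; omega), if_neg (by simp [Fin.ext_iff]; omega),
          add_zero]
      rw [h0, hle r (by omega) k]
      by_cases hkr : k = r
      · subst hkr
        simp
      · by_cases hk : (k : ℕ) + 1 = r
        · simp [hkr, hk, show (k : ℕ) ≠ j by omega, show (k : ℕ) ≠ j + 1 by omega]
        · simp [hkr, hk]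
    · have hrv : (r : ℕ) = j + 1 := by omega
      rw [hgt r (by omega)]
      by_cases hk : (k : ℕ) = j
      · simp [one_apply, hk, Fin.ext_iff, hb, hrv]
      · by_cases hk' : (k : ℕ) = j + 1
        · simp [one_apply, hk', Fin.ext_iff, hrv]
        · simp [one_apply, hk, hk', Fin.ext_iff, hrv]
          omega
  · ext k
    rw [mul_Yb_apply_s18 _ _ hj, hgt r (by omega)]
    by_cases hkr : k = r
    · subst hkr
      simp [show (k : ℕ) ≠ j by omega, show (k : ℕ) ≠ j + 1 by omega]
    · simp [one_apply, Fin.ext_iff, Fin.val_ne_of_ne (Ne.symm hkr),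
        show (r : ℕ) ≠ j + 1 by omega]

theorem isBidiagonalBlock_prod_Yb {n : ℕ} (m : ℕ) (hm : m ≤ n) (a : ℕ → ℂ)
    (ha : ∀ l, 1 ≤ l → l ≤ m → a l ≠ 0) :
    IsBidiagonalBlock m (((List.range m).map fun l => Yb n (l+1) (a (l+1))).prod) := by
  induction m with
  | zero =>
    refine ⟨fun r hr k => ?_, fun r _ => by simp⟩
    obtain rfl : r = 0 := Fin.ext (by simpa using hr)
    simp [one_apply, eq_comm]
  | succ j ih =>
    rw [List.range_succ, List.map_append, List.prod_append, List.map_singleton,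
      List.prod_singleton]
    exact (ih (by omega) fun l h1 h2 => ha l h1 (by omega)).mul_Yb hm (ha _ (by omega) le_rfl)

section Theta

variable {n : ℕ} {c : ℕ → ℕ → ℂ}

/-- `rowFactor n c k` is the factor of `Θ(c)` with index `k + 1`, and `thetaTail n c j` is the
product of the last `j` factors. -/
noncomputable def rowFactor (n : ℕ) (c : ℕ → ℕ → ℂ) (k : ℕ) :
    Matrix (Fin (n+1)) (Fin (n+1)) ℂ :=
  ((List.range (n - k)).map fun l => Yb n (l+1) (c (k+1) (l+1))).prod

noncomputable def thetaTail (n : ℕ) (c : ℕ → ℕ → ℂ) (j : ℕ) : Matrix (Fin (n+1)) (Fin (n+1)) ℂ :=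
  ((List.range' (n - j) j).map (rowFactor n c)).prod

theorem Theta_eq_thetaTail : Theta n c = thetaTail n c n := by
  rw [Theta, thetaTail, Nat.sub_self, ← List.range_eq_range']
  rfl

theorem thetaTail_succ {j : ℕ} (hj : j + 1 ≤ n) :
    thetaTail n c (j + 1) = rowFactor n c (n - (j + 1)) * thetaTail n c j := by
  rw [thetaTail, List.range'_succ, List.map_cons, List.prod_cons,
    show n - (j + 1) + 1 = n - j by omega]
  rfl

theorem det_rowFactor (hc : ∀ k l, 1 ≤ k → 1 ≤ l → k + l ≤ n + 1 → c k l ≠ 0) (k : ℕ) :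
    (rowFactor n c k).det = 1 := by
  rw [rowFactor, ← coe_detMonoidHom, map_list_prod, List.map_map]
  refine List.prod_eq_one fun x hx => ?_
  obtain ⟨l, hl, rfl⟩ := List.mem_map.mp hx
  have hl := List.mem_range.mp hl
  exact det_Yb l (by omega) _ (hc _ _ (by omega) (by omega) (by omega))

theorem det_thetaTail (hc : ∀ k l, 1 ≤ k → 1 ≤ l → k + l ≤ n + 1 → c k l ≠ 0) (j : ℕ) :
    (thetaTail n c j).det = 1 := by
  rw [thetaTail, ← coe_detMonoidHom, map_list_prod, List.map_map]
  exact List.prod_eq_one fun x hx => by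
    obtain ⟨k, -, rfl⟩ := List.mem_map.mp hx
    exact det_rowFactor hc k

theorem isBidiagonalBlock_rowFactor (hc : ∀ k l, 1 ≤ k → 1 ≤ l → k + l ≤ n + 1 → c k l ≠ 0)
    {j : ℕ} (hj : j + 1 ≤ n) : IsBidiagonalBlock (j + 1) (rowFactor n c (n - (j + 1))) := by
  rw [rowFactor, show n - (n - (j + 1)) = j + 1 by omega]
  exact isBidiagonalBlock_prod_Yb (j + 1) hj _ fun l h1 h2 => hc _ _ (by omega) h1 (by omega)

theorem thetaTail_row_of_lt (hc : ∀ k l, 1 ≤ k → 1 ≤ l → k + l ≤ n + 1 → c k l ≠ 0) {j : ℕ}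
    (hj : j ≤ n) (r : Fin (n+1)) (hr : j < r) :
    thetaTail n c j r = (1 : Matrix (Fin (n+1)) (Fin (n+1)) ℂ) r := by
  induction j with
  | zero => simp [thetaTail]
  | succ j ih =>
    ext q
    rw [thetaTail_succ hj, mul_apply_of_row_eq_one
      ((isBidiagonalBlock_rowFactor hc hj).row_of_gt r hr), ih (by omega) (by omega)]

theorem leftMinor_zero_thetaTail (hc : ∀ k l, 1 ≤ k → 1 ≤ l → k + l ≤ n + 1 → c k l ≠ 0)
    {j : ℕ} (hj : j ≤ n) (s : ℕ) (hs : 0 + s = j + 1) :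
    leftMinor (thetaTail n c j) 0 s (by omega) = 1 := by
  rw [leftMinor_zero_eq_det _ _ _ fun r hr => thetaTail_row_of_lt hc hj r (by omega),
    det_thetaTail hc]

theorem leftMinor_thetaTail (hc : ∀ k l, 1 ≤ k → 1 ≤ l → k + l ≤ n + 1 → c k l ≠ 0) {j : ℕ}
    (hj : j ≤ n) (p s : ℕ) (hps : p + s = j + 1) :
    leftMinor (thetaTail n c j) p s (by omega) = 1 := by
  induction j generalizing p with
  | zero =>
    rcases p with _ | p
    · exact leftMinor_zero_thetaTail hc hj s hps
    · obtain rfl : s = 0 := by omega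
      simp [leftMinor]
  | succ j ih =>
    rcases p with _ | p
    · exact leftMinor_zero_thetaTail hc hj s hps
    have hR := (isBidiagonalBlock_rowFactor hc hj).row_of_le
    rw [thetaTail_succ hj, leftMinor_mul_of_bidiagonal _ _ p s (by omega) _
      (fun a k => by
        rw [hR _ (by simp; omega) k]
        congr 1
        exact if_congr (by simp [Fin.ext_iff]; omega) rfl rfl)
      (fun q hq => by
        rw [thetaTail_row_of_lt hc (by omega) _ (by simp; omega), one_apply_ne]
        simp [Fin.ext_iff]; omega)]
    exact ih (by omega) p (by omega)

end Theta

theorem decoration_summand_diagonal_mul {K : Type*} [Field K] {N s : ℕ} (d : Fin N → K)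
    (hd : ∀ r, d r ≠ 0) (M : Matrix (Fin N) (Fin N) K) (f₀ f₁ g₀ g₁ : Fin (s + 1) → Fin N)
    (hf : ∀ a : Fin s, f₁ a.succ = f₀ a.succ) (hM : (M.submatrix f₀ g₀).det = 1) :
    (((diagonal d * M).submatrix f₀ g₁).det + ((diagonal d * M).submatrix f₁ g₀).det) /
        ((diagonal d * M).submatrix f₀ g₀).det =
      (M.submatrix f₀ g₁).det + d (f₁ 0) / d (f₀ 0) * (M.submatrix f₁ g₀).det := by
  simp only [det_submatrix_diagonal_mul, hM, Fin.prod_univ_succ (fun a => d (f₁ a)), hf,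
    Fin.prod_univ_succ (fun a => d (f₀ a))]
  field_simp [hd (f₀ 0), Finset.prod_ne_zero_iff.mpr fun a _ => hd _]

/-- Evaluation of the decoration: for `g = t·Θ(c)` with `t = diag(t_1,…,t_{n+1}) ∈ SL_{n+1}`,
all the principal generalized minors `Δ_{w₀Λ_i,Λ_i}(g)` are nonzero and
`f_B(g) = Σ_i (Δ_{w₀Λ_i,s_iΛ_i}(g) + Δ_{w₀s_iΛ_i,Λ_i}(g))/Δ_{w₀Λ_i,Λ_i}(g)
 = Σ_j [ Δ_{w₀Λ_j,s_jΛ_j}(Θ(c)) + (t_j/t_{j+1})·Δ_{w₀s_jΛ_j,Λ_j}(Θ(c)) ]`,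
where the minors are on the rows/columns described in the statement. -/
theorem stmt18 (n : ℕ) (td : Fin (n+1) → ℂ)
    (hdet : (Matrix.diagonal td).det = 1)
    (c : ℕ → ℕ → ℂ) (hc : ∀ k l, 1 ≤ k → 1 ≤ l → k + l ≤ n + 1 → c k l ≠ 0)
    (g : Matrix (Fin (n+1)) (Fin (n+1)) ℂ)
    (hg : g = Matrix.diagonal td * Theta n c) :
    (∀ i : Fin n,
      (g.submatrix
        (fun a : Fin ((i : ℕ) + 1) =>
          (⟨n - (i : ℕ) + (a : ℕ), by have := a.isLt; have := i.isLt; omega⟩ : Fin (n+1)))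
        (fun a : Fin ((i : ℕ) + 1) =>
          (⟨(a : ℕ), by have := a.isLt; have := i.isLt; omega⟩ : Fin (n+1)))).det ≠ 0) ∧
    (∑ i : Fin n,
        ((g.submatrix
            (fun a : Fin ((i : ℕ) + 1) =>
              (⟨n - (i : ℕ) + (a : ℕ), by have := a.isLt; have := i.isLt; omega⟩ : Fin (n+1)))
            (fun a : Fin ((i : ℕ) + 1) =>
              if (a : ℕ) = (i : ℕ) then i.succ
              else (⟨(a : ℕ), by have := a.isLt; have := i.isLt; omega⟩ : Fin (n+1)))).det
          + (g.submatrix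
            (fun a : Fin ((i : ℕ) + 1) =>
              if (a : ℕ) = 0 then
                (⟨n - ((i : ℕ) + 1), by omega⟩ : Fin (n+1))
              else (⟨n - (i : ℕ) + (a : ℕ), by have := a.isLt; have := i.isLt; omega⟩ :
                Fin (n+1)))
            (fun a : Fin ((i : ℕ) + 1) =>
              (⟨(a : ℕ), by have := a.isLt; have := i.isLt; omega⟩ : Fin (n+1)))).det)
        / (g.submatrix
            (fun a : Fin ((i : ℕ) + 1) =>
              (⟨n - (i : ℕ) + (a : ℕ), by have := a.isLt; have := i.isLt; omega⟩ : Fin (n+1)))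
            (fun a : Fin ((i : ℕ) + 1) =>
              (⟨(a : ℕ), by have := a.isLt; have := i.isLt; omega⟩ : Fin (n+1)))).det
      = ∑ j : Fin n,
        (((Theta n c).submatrix
            (fun a : Fin ((j : ℕ) + 1) =>
              (⟨n - (j : ℕ) + (a : ℕ), by have := a.isLt; have := j.isLt; omega⟩ : Fin (n+1)))
            (fun a : Fin ((j : ℕ) + 1) =>
              if (a : ℕ) = (j : ℕ) then j.succ
              else (⟨(a : ℕ), by have := a.isLt; have := j.isLt; omega⟩ : Fin (n+1)))).det
          + (td j.castSucc / td j.succ) *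
            ((Theta n c).submatrix
              (fun a : Fin (n - (j : ℕ)) =>
                if (a : ℕ) = 0 then j.castSucc
                else (⟨(j : ℕ) + 1 + (a : ℕ), by have := a.isLt; have := j.isLt; omega⟩ :
                  Fin (n+1)))
              (fun a : Fin (n - (j : ℕ)) =>
                (⟨(a : ℕ), by have := a.isLt; have := j.isLt; omega⟩ : Fin (n+1)))).det)) := by
  subst hg
  have htd : ∀ r, td r ≠ 0 := fun r hr => by
    simp [det_diagonal, Finset.prod_eq_zero (Finset.mem_univ r) hr] at hdet
  have hcorner : ∀ i : Fin n, leftMinor (Theta n c) (n - i) (i + 1) (by omega) = 1 := fun i => by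
    rw [Theta_eq_thetaTail]
    exact leftMinor_thetaTail hc le_rfl _ _ (by omega)
  simp only [leftMinor] at hcorner
  refine ⟨fun i => ?_, ?_⟩
  · rw [det_submatrix_diagonal_mul, hcorner i, mul_one]
    exact Finset.prod_ne_zero_iff.mpr fun a _ => htd _
  rw [Finset.sum_congr rfl fun i _ => decoration_summand_diagonal_mul td htd _ _ _ _ _
    (fun a => by simp) (hcorner i), Finset.sum_add_distrib, Finset.sum_add_distrib]
  congr 1
  -- on the right the `Δ^{(2)}` terms are indexed by `j = n - 1 - i`
  refine Fintype.sum_equiv Fin.revPerm _ _ fun i => ?_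
  have hrev : ((Fin.revPerm i : Fin n) : ℕ) = n - (i + 1) := by simp [Fin.val_rev]
  congr 1
  · congr 2
    ext
    simp
    omega
  · refine det_submatrix_congr_fin _ (by omega) _ _ _ _ (fun a => ?_) (fun a => rfl)
    ext
    simp only [Fin.val_cast, hrev]
    split_ifs
    · simp
    · simp only
      omega
end

section
/- Let g ∈ SL_{n+1}(ℂ) and suppose g = b·u with b lower triangular and u upper triangular unipotent. Then for every 1 ≤ i ≤ n, the leading principal minor of g of size i is nonzero and the elementary character value χ_i(π⁺(g)) = u_{i,i+1} is given by u_{i,i+1} = ( minor of g on rows {1,…,i} and columns {1,…,i−1,i+1} ) / ( minor of g on rows {1,…,i} and columns {1,…,i} ). -/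
/-!
Restricting `g = b * u` to the first `i + 1` rows, the lower triangular `b` only contributes its
leading `(i + 1) × (i + 1)` block, so every minor of `g` on these rows is `∏_{a ≤ i} b_{aa}` times
the corresponding minor of `u`. For the principal minor, the minor of `u` is `1`; for the columns
`0, …, i - 1, i + 1` it is upper triangular with diagonal `1, …, 1, u_{i,i+1}`. The diagonal of
`b` consists of units since `det b * det u = det g = 1`.
-/

open Matrix

namespace Matrix

variable {R : Type*}

theorem submatrix_castLE_mul_of_isLowerTriangular [NonUnitalNonAssocSemiring R]
    {n m : ℕ} {ι κ : Type*} (hm : m ≤ n) {b : Matrix (Fin n) (Fin n) R}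
    (hb : b.IsLowerTriangular) (u : Matrix (Fin n) ι R) (c : κ → ι) :
    (b * u).submatrix (Fin.castLE hm) c
      = b.submatrix (Fin.castLE hm) (Fin.castLE hm) * u.submatrix (Fin.castLE hm) c := by
  ext a a'
  refine (Fintype.sum_of_injective (Fin.castLE hm) (Fin.castLE_injective hm) _ _ ?_ ?_).symm
  · rintro k hk
    have hak : Fin.castLE hm a < k := by
      by_contra! hka
      exact hk ⟨⟨k, lt_of_le_of_lt hka a.isLt⟩, rfl⟩
    exact mul_eq_zero_of_left (hb hak) _
  · intro _
    rfl

theorem IsUpperTriangular.submatrix_of_strictMono [Zero R] {ι κ : Type*} [LinearOrder ι]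
    [LinearOrder κ] {u : Matrix ι ι R} (hu : u.IsUpperTriangular) {f : κ → ι}
    (hf : StrictMono f) : (u.submatrix f f).IsUpperTriangular :=
  fun _ _ h => hu (hf h)

theorem IsLowerTriangular.submatrix_of_strictMono [Zero R] {ι κ : Type*} [LinearOrder ι]
    [LinearOrder κ] {b : Matrix ι ι R} (hb : b.IsLowerTriangular) {f : κ → ι}
    (hf : StrictMono f) : (b.submatrix f f).IsLowerTriangular :=
  fun _ _ h => hb (hf h)

theorem IsLowerTriangular.isUnit_diag_of_isUnit_det [CommRing R] {ι : Type*} [Fintype ι]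
    [DecidableEq ι] [LinearOrder ι] {b : Matrix ι ι R} (hb : b.IsLowerTriangular)
    (h : IsUnit b.det) (j : ι) : IsUnit (b j j) := by
  rw [det_of_isLowerTriangular b hb] at h
  exact IsUnit.prod_univ_iff.1 h j

theorem det_submatrix_castLE_mul_of_isLowerTriangular [CommRing R] {n m : ℕ} {ι : Type*}
    (hm : m ≤ n) {b : Matrix (Fin n) (Fin n) R} (hb : b.IsLowerTriangular)
    (u : Matrix (Fin n) ι R) (c : Fin m → ι) :
    ((b * u).submatrix (Fin.castLE hm) c).det
      = (∏ a, b (Fin.castLE hm a) (Fin.castLE hm a)) * (u.submatrix (Fin.castLE hm) c).det := by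
  rw [submatrix_castLE_mul_of_isLowerTriangular hm hb, det_mul,
    det_of_isLowerTriangular _ (hb.submatrix_of_strictMono (Fin.strictMono_castLE hm))]
  rfl

theorem det_submatrix_of_unitriangular [CommRing R] {ι κ : Type*} [LinearOrder ι]
    [Fintype κ] [LinearOrder κ] {u : Matrix ι ι R} (hu : u.IsUpperTriangular)
    (hu1 : ∀ p, u p p = 1) {f : κ → ι} (hf : StrictMono f) : (u.submatrix f f).det = 1 := by
  rw [det_of_isUpperTriangular (hu.submatrix_of_strictMono hf)]
  simp [hu1]

theorem det_submatrix_castLE_shiftLast_of_unitriangular [CommRing R] {n : ℕ}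
    {u : Matrix (Fin (n + 1)) (Fin (n + 1)) R} (hu : u.IsUpperTriangular)
    (hu1 : ∀ p, u p p = 1) (i : Fin n) (hi : (i : ℕ) + 1 ≤ n + 1) :
    (u.submatrix (Fin.castLE hi)
      (fun a : Fin ((i : ℕ) + 1) => if (a : ℕ) = i then i.succ else Fin.castLE hi a)).det
      = u i.castSucc i.succ := by
  rw [det_of_isUpperTriangular, Fin.prod_univ_castSucc, Finset.prod_eq_one, one_mul]
  · simp only [submatrix_apply, Fin.val_last]
    rfl
  · intro j _
    simp only [submatrix_apply, Fin.val_castSucc, if_neg j.isLt.ne]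
    exact hu1 _
  · intro p q hqp
    have hqi : (q : ℕ) ≠ i := by have := p.isLt; have : (q : ℕ) < p := hqp; omega
    simp only [submatrix_apply, if_neg hqi]
    exact hu hqp

end Matrix

/-- For `g ∈ SL_{n+1}(ℂ)` with a Gauss decomposition `g = b·u` (`b` lower triangular, `u`
upper triangular unipotent): every leading principal minor of `g` of size `1 ≤ i ≤ n` is
nonzero, and the elementary character value `χ_i(π⁺(g)) = u_{i,i+1}` equals
`Δ_{Λ_i,s_iΛ_i}(g)/Δ_{Λ_i,Λ_i}(g)`, the ratio of the minor of `g` on rows `{1,…,i}` and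
columns `{1,…,i−1,i+1}` by the leading principal minor of size `i`. -/
theorem stmt19 (n : ℕ) (g b u : Matrix (Fin (n+1)) (Fin (n+1)) ℂ)
    (hdet : g.det = 1) (hg : g = b * u)
    (hb : ∀ p q : Fin (n+1), p < q → b p q = 0)
    (hu : ∀ p q : Fin (n+1), q < p → u p q = 0)
    (hu1 : ∀ p : Fin (n+1), u p p = 1) :
    ∀ i : Fin n,
      (g.submatrix
          (fun a : Fin ((i : ℕ) + 1) => Fin.castLE (by have := i.isLt; omega) a)
          (fun a : Fin ((i : ℕ) + 1) => Fin.castLE (by have := i.isLt; omega) a)).det ≠ 0 ∧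
      u i.castSucc i.succ
        = (g.submatrix
            (fun a : Fin ((i : ℕ) + 1) => Fin.castLE (by have := i.isLt; omega) a)
            (fun a : Fin ((i : ℕ) + 1) =>
              if (a : ℕ) = (i : ℕ) then i.succ
              else Fin.castLE (by have := i.isLt; omega) a)).det
          / (g.submatrix
            (fun a : Fin ((i : ℕ) + 1) => Fin.castLE (by have := i.isLt; omega) a)
            (fun a : Fin ((i : ℕ) + 1) => Fin.castLE (by have := i.isLt; omega) a)).det := by
  intro i
  have hm : (i : ℕ) + 1 ≤ n + 1 := by have := i.isLt; omega
  have hbL : b.IsLowerTriangular := fun p q h => hb p q h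
  have huU : u.IsUpperTriangular := fun p q h => hu p q h
  have hdetb : IsUnit b.det := IsUnit.of_mul_eq_one u.det (by rw [← det_mul, ← hg, hdet])
  have hden : (g.submatrix (Fin.castLE hm) (Fin.castLE hm)).det
      = ∏ a, b (Fin.castLE hm a) (Fin.castLE hm a) := by
    rw [hg, det_submatrix_castLE_mul_of_isLowerTriangular hm hbL,
      det_submatrix_of_unitriangular huU hu1 (Fin.strictMono_castLE hm), mul_one]
  have hnum : (g.submatrix (Fin.castLE hm) fun a : Fin ((i : ℕ) + 1) =>
        if (a : ℕ) = i then i.succ else Fin.castLE hm a).det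
      = (g.submatrix (Fin.castLE hm) (Fin.castLE hm)).det * u i.castSucc i.succ := by
    rw [hden, hg, det_submatrix_castLE_mul_of_isLowerTriangular hm hbL,
      det_submatrix_castLE_shiftLast_of_unitriangular huU hu1 i hm]
  have hden_ne : (g.submatrix (Fin.castLE hm) (Fin.castLE hm)).det ≠ 0 := by
    rw [hden]
    exact (IsUnit.prod_univ_iff.2 fun a => hbL.isUnit_diag_of_isUnit_det hdetb _).ne_zero
  exact ⟨hden_ne, by rw [hnum, mul_div_cancel_left₀ _ hden_ne]⟩
end
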